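/- arXiv:math/0112290 — 9 statements merged into one kernel-verified Lean document; each statement's English description precedes it below -/
import Mathlib

section
/- If V is a set of 2n points (n ≥ 2) in the closed unit ball of ℝⁿ maximizing the minimum pairwise distance, then V is the vertex set of a regular cross-polytope inscribed in the unit sphere, i.e., V = {±e₁, ..., ±eₙ} for some orthonormal basis e₁,...,eₙ. -/
open EuclideanSpace

/-- The minimum pairwise distance of a finite point set (as an infimum). -/
noncomputable def minPairDist {n : ℕ} (V : Finset (EuclideanSpace ℝ (Fin n))) : ℝ :=
  sInf {d : ℝ | ∃ u ∈ V, ∃ v ∈ V, u ≠ v ∧ d = dist u v}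

/-!
The cross-polytope has minimum distance `√2`, so any two points of an optimal `V` are at
distance at least `√2`, which inside the unit ball forces their inner product to be `≤ 0`.
Nonzero vectors with pairwise non-positive inner products number at most `2d` in dimension `d`:
project the others onto the orthogonal complement of one of them, where they stay pairwise
obtuse and at most one of them (a negative multiple) is lost, and induct on `d`. If there are
exactly `2d` of them, the projection step must lose a point, so each `u ∈ V` has a negative
multiple `a • u ∈ V`.
Any third point is then orthogonal to `u`, and distance `√2` from it forces `‖u‖ = 1`; hence
`a = -1`, and `V` consists of antipodal pairs of pairwise orthogonal unit vectors.
-/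

open Finset Module Pointwise
open scoped RealInnerProductSpace

variable {E : Type*} [NormedAddCommGroup E] [InnerProductSpace ℝ E]

theorem inner_orthogonalProjectionOnto_orthogonal_singleton_le {u x y : E}
    (h : 0 ≤ ⟪u, x⟫ * ⟪u, y⟫) :
    ⟪(ℝ ∙ u)ᗮ.orthogonalProjectionOnto x, (ℝ ∙ u)ᗮ.orthogonalProjectionOnto y⟫ ≤ ⟪x, y⟫ := by
  rw [Submodule.inner_orthogonalProjectionOnto_eq_of_mem_left, ← Submodule.starProjection_apply,
    Submodule.starProjection_orthogonal_val, Submodule.starProjection_singleton, inner_sub_left,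
    real_inner_smul_left, div_mul_eq_mul_div, RCLike.ofReal_real_eq_id, id_eq]
  have : 0 ≤ ⟪u, x⟫ * ⟪u, y⟫ / ‖u‖ ^ 2 := by positivity
  linarith

theorem orthogonalProjectionOnto_orthogonal_eq_zero_iff (K : Submodule ℝ E)
    [K.HasOrthogonalProjection] {x : E} : Kᗮ.orthogonalProjectionOnto x = 0 ↔ x ∈ K := by
  simp [Submodule.orthogonal_orthogonal]

theorem neg_of_smul_mem {S : Finset E} (h0 : (0 : E) ∉ S)
    (hS : (S : Set E).Pairwise fun x y => ⟪x, y⟫ ≤ 0) {u : E} (hu : u ∈ S) {a : ℝ}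
    (ha : a • u ∈ S) (hne : a • u ≠ u) : a < 0 := by
  have hu0 : 0 < ‖u‖ ^ 2 := by
    have := norm_pos_iff.mpr (ne_of_mem_of_not_mem hu h0)
    positivity
  have ha0 : a ≠ 0 := by
    rintro rfl
    exact h0 (by simpa using ha)
  have hinner : ⟪u, a • u⟫ ≤ 0 := hS hu ha hne.symm
  rw [real_inner_smul_right, real_inner_self_eq_norm_sq] at hinner
  exact lt_of_le_of_ne (nonpos_of_mul_nonpos_left hinner hu0) ha0

section Projection

variable [DecidableEq E] {S : Finset E} {u : E}

theorem injOn_orthogonalProjectionOnto_erase (h0 : (0 : E) ∉ S)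
    (hS : (S : Set E).Pairwise fun x y => ⟪x, y⟫ ≤ 0) (hu : u ∈ S) :
    Set.InjOn (ℝ ∙ u)ᗮ.orthogonalProjectionOnto (S.erase u) := by
  intro x hx y hy hxy
  simp only [coe_erase, Set.mem_sdiff, mem_coe, Set.mem_singleton_iff] at hx hy
  by_contra hne
  have hinner : ⟪x, y⟫ ≤ 0 := hS hx.1 hy.1 hne
  have hproj_sq : ‖(ℝ ∙ u)ᗮ.orthogonalProjectionOnto x‖ ^ 2 ≤ 0 := calc
    _ = ⟪(ℝ ∙ u)ᗮ.orthogonalProjectionOnto x, (ℝ ∙ u)ᗮ.orthogonalProjectionOnto y⟫ := by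
      rw [hxy, real_inner_self_eq_norm_sq]
    _ ≤ ⟪x, y⟫ := inner_orthogonalProjectionOnto_orthogonal_singleton_le <|
      mul_nonneg_of_nonpos_of_nonpos (hS hu hx.1 (Ne.symm hx.2)) (hS hu hy.1 (Ne.symm hy.2))
    _ ≤ 0 := hinner
  have hx0 : (ℝ ∙ u)ᗮ.orthogonalProjectionOnto x = 0 :=
    norm_eq_zero.mp <| (pow_eq_zero_iff two_ne_zero).mp <| le_antisymm hproj_sq (sq_nonneg _)
  -- both `x` and `y` are then negative multiples of `u`, whose inner product is positive
  obtain ⟨a, rfl⟩ := Submodule.mem_span_singleton.mp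
    ((orthogonalProjectionOnto_orthogonal_eq_zero_iff _).mp hx0)
  obtain ⟨b, rfl⟩ := Submodule.mem_span_singleton.mp
    ((orthogonalProjectionOnto_orthogonal_eq_zero_iff _).mp (hxy ▸ hx0))
  have ha := neg_of_smul_mem h0 hS hu hx.1 hx.2
  have hb := neg_of_smul_mem h0 hS hu hy.1 hy.2
  have hu0 : 0 < ‖u‖ ^ 2 := by
    have := norm_pos_iff.mpr (ne_of_mem_of_not_mem hu h0)
    positivity
  rw [real_inner_smul_left, real_inner_smul_right, real_inner_self_eq_norm_sq] at hinner
  nlinarith [mul_pos_of_neg_of_neg ha hb]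

theorem card_image_orthogonalProjectionOnto_erase (h0 : (0 : E) ∉ S)
    (hS : (S : Set E).Pairwise fun x y => ⟪x, y⟫ ≤ 0) (hu : u ∈ S) :
    #((S.erase u).image (ℝ ∙ u)ᗮ.orthogonalProjectionOnto) + 1 = #S := by
  rw [card_image_of_injOn (injOn_orthogonalProjectionOnto_erase h0 hS hu), card_erase_add_one hu]

theorem pairwise_inner_image_orthogonalProjectionOnto_erase
    (hS : (S : Set E).Pairwise fun x y => ⟪x, y⟫ ≤ 0) (hu : u ∈ S) :
    (((S.erase u).image (ℝ ∙ u)ᗮ.orthogonalProjectionOnto : Finset (ℝ ∙ u)ᗮ) :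
      Set (ℝ ∙ u)ᗮ).Pairwise fun x y => ⟪x, y⟫ ≤ 0 := by
  simp only [coe_image, coe_erase]
  rintro _ ⟨x, hx, rfl⟩ _ ⟨y, hy, rfl⟩ hne
  simp only [Set.mem_sdiff, mem_coe, Set.mem_singleton_iff] at hx hy
  have hxy : x ≠ y := fun h => hne (h ▸ rfl)
  calc _ ≤ ⟪x, y⟫ := inner_orthogonalProjectionOnto_orthogonal_singleton_le <|
        mul_nonneg_of_nonpos_of_nonpos (hS hu hx.1 (Ne.symm hx.2)) (hS hu hy.1 (Ne.symm hy.2))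
    _ ≤ 0 := hS hx.1 hy.1 hxy

end Projection

theorem card_le_two_mul_finrank_of_pairwise_inner_nonpos [FiniteDimensional ℝ E] {S : Finset E}
    (h0 : (0 : E) ∉ S) (hS : (S : Set E).Pairwise fun x y => ⟪x, y⟫ ≤ 0) :
    #S ≤ 2 * finrank ℝ E := by
  classical
  obtain ⟨d, hd⟩ : ∃ d, finrank ℝ E = d := ⟨_, rfl⟩
  induction d generalizing E with
  | zero =>
    have : Subsingleton E := finrank_zero_iff.mp hd
    rcases S.eq_empty_or_nonempty with rfl | ⟨x, hx⟩
    · simp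
    · exact absurd (Subsingleton.elim x 0 ▸ hx) h0
  | succ d ih =>
    rcases S.eq_empty_or_nonempty with rfl | ⟨u, hu⟩
    · simp
    have hK := Submodule.finrank_add_finrank_orthogonal (ℝ ∙ u)
    rw [finrank_span_singleton (ne_of_mem_of_not_mem hu h0), hd] at hK
    set T := (S.erase u).image (ℝ ∙ u)ᗮ.orthogonalProjectionOnto
    have hT := ih (S := T.erase 0) (notMem_erase 0 T)
      ((pairwise_inner_image_orthogonalProjectionOnto_erase hS hu).mono
        (coe_subset.mpr (erase_subset 0 T))) (by omega)
    have hTcard : #T + 1 = #S := card_image_orthogonalProjectionOnto_erase h0 hS hu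
    have := pred_card_le_card_erase (s := T) (a := 0)
    omega

theorem exists_neg_smul_mem_of_card_eq_two_mul_finrank [FiniteDimensional ℝ E] {S : Finset E}
    (h0 : (0 : E) ∉ S) (hS : (S : Set E).Pairwise fun x y => ⟪x, y⟫ ≤ 0)
    (hcard : #S = 2 * finrank ℝ E) {u : E} (hu : u ∈ S) : ∃ a : ℝ, a < 0 ∧ a • u ∈ S := by
  classical
  by_contra! hno
  have hK := Submodule.finrank_add_finrank_orthogonal (ℝ ∙ u)
  rw [finrank_span_singleton (ne_of_mem_of_not_mem hu h0)] at hK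
  have h0' : 0 ∉ (S.erase u).image (ℝ ∙ u)ᗮ.orthogonalProjectionOnto := by
    rintro hmem
    obtain ⟨x, hx', hx0⟩ := mem_image.mp hmem
    obtain ⟨hxu, hx⟩ := mem_erase.mp hx'
    obtain ⟨a, rfl⟩ := Submodule.mem_span_singleton.mp
      ((orthogonalProjectionOnto_orthogonal_eq_zero_iff _).mp hx0)
    exact (hno a (neg_of_smul_mem h0 hS hu hx hxu)) hx
  have := card_le_two_mul_finrank_of_pairwise_inner_nonpos h0'
    (pairwise_inner_image_orthogonalProjectionOnto_erase hS hu)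
  have := card_image_orthogonalProjectionOnto_erase h0 hS hu
  omega

section OrthonormalFinset

variable [DecidableEq E] {H : Finset E}

theorem disjoint_neg_of_orthonormal (hH : Orthonormal ℝ ((↑) : H → E)) :
    Disjoint H (-H) := by
  rw [disjoint_left]
  intro x hx hnx
  have := orthonormal_subtype_iff_ite.mp hH x hx (-x) (mem_neg'.mp hnx)
  rw [inner_neg_right, real_inner_self_eq_norm_sq, hH.1 ⟨x, hx⟩] at this
  split_ifs at this <;> norm_num at this

theorem card_union_neg_of_orthonormal (hH : Orthonormal ℝ ((↑) : H → E)) :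
    #(H ∪ -H) = 2 * #H := by
  rw [card_union_of_disjoint (disjoint_neg_of_orthonormal hH), card_neg, two_mul]

theorem norm_eq_one_of_mem_union_neg (hH : Orthonormal ℝ ((↑) : H → E))
    {x : E} (hx : x ∈ H ∪ -H) : ‖x‖ = 1 := by
  rcases mem_union.mp hx with hx | hx
  · exact hH.1 ⟨x, hx⟩
  · simpa using hH.1 ⟨-x, mem_neg'.mp hx⟩

theorem pairwise_inner_nonpos_union_neg (hH : Orthonormal ℝ ((↑) : H → E)) :
    ((H ∪ -H : Finset E) : Set E).Pairwise fun x y => ⟪x, y⟫ ≤ 0 := by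
  have hite := orthonormal_subtype_iff_ite.mp hH
  intro x hx y hy hxy
  simp only [coe_union, coe_neg, Set.mem_union, Set.mem_neg, mem_coe] at hx hy
  rcases hx with hx | hx <;> rcases hy with hy | hy
  · rw [hite x hx y hy, if_neg hxy]
  · rw [← neg_neg y, inner_neg_right, hite x hx (-y) hy]
    split_ifs <;> norm_num
  · rw [← neg_neg x, inner_neg_left, hite (-x) hx y hy]
    split_ifs <;> norm_num
  · rw [← neg_neg x, ← neg_neg y, inner_neg_neg, hite (-x) hx (-y) hy,
      if_neg (neg_inj.not.mpr hxy)]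

end OrthonormalFinset

theorem exists_orthonormal_eq_union_neg [DecidableEq E] {S : Finset E}
    (hnorm : ∀ x ∈ S, ‖x‖ = 1) (hneg : ∀ x ∈ S, -x ∈ S)
    (horth : (S : Set E).Pairwise fun x y => y ≠ -x → ⟪x, y⟫ = 0) :
    ∃ H : Finset E, Orthonormal ℝ ((↑) : H → E) ∧ S = H ∪ -H := by
  -- a largest pairwise orthogonal subset of `S` meets every pair `{x, -x}`
  let F := S.powerset.filter fun H : Finset E => (H : Set E).Pairwise fun x y => ⟪x, y⟫ = 0
  obtain ⟨H, hHF, hmax⟩ := F.exists_max_image card ⟨∅, by simp [F]⟩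
  obtain ⟨hHS, hHorth⟩ := mem_filter.mp hHF
  rw [mem_powerset] at hHS
  refine ⟨H, ?_, subset_antisymm ?_ (union_subset hHS ?_)⟩
  · rw [orthonormal_subtype_iff_ite]
    intro x hx y hy
    split_ifs with hxy
    · rw [← hxy, real_inner_self_eq_norm_sq, hnorm x (hHS hx), one_pow]
    · exact hHorth hx hy hxy
  · intro x hx
    by_contra hxH
    simp only [mem_union, mem_neg', not_or] at hxH
    have hins : insert x H ∈ F := by
      refine mem_filter.mpr ⟨mem_powerset.mpr (insert_subset hx hHS), ?_⟩
      rw [coe_insert, Set.pairwise_insert]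
      refine ⟨hHorth, fun y hy hxy => ?_⟩
      have hyx : y ≠ -x := fun h => hxH.2 (h ▸ hy)
      have := horth hx (hHS hy) hxy hyx
      exact ⟨this, by rwa [real_inner_comm]⟩
    have := hmax _ hins
    rw [card_insert_of_notMem hxH.1] at this
    omega
  · intro x hx
    simpa using hneg _ (hHS (mem_neg'.mp hx))

theorem exists_orthonormalBasis_range_eq {ι : Type*} [Fintype ι] [FiniteDimensional ℝ E]
    {H : Finset E} (hH : Orthonormal ℝ ((↑) : H → E))
    (hcard : #H = Fintype.card ι) (hdim : finrank ℝ E = Fintype.card ι) :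
    ∃ b : OrthonormalBasis ι ℝ E, Set.range b = H := by
  let e : ι ≃ (H : Set E) := Fintype.equivOfCardEq (by simp [hcard])
  obtain ⟨b, hb⟩ := Orthonormal.exists_orthonormalBasis_extension_of_card_eq hdim
    (v := Subtype.val ∘ e) (s := Set.univ) (hH.comp _ (e.injective.comp Subtype.val_injective))
  refine ⟨b, ?_⟩
  have : ⇑b = Subtype.val ∘ e := funext fun i => hb i trivial
  rw [this, Set.range_comp, e.range_eq_univ, Set.image_univ, Subtype.range_coe]

theorem exists_orthonormal_card_eq_finrank [FiniteDimensional ℝ E] [DecidableEq E] :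
    ∃ H : Finset E, Orthonormal ℝ ((↑) : H → E) ∧ #H = finrank ℝ E := by
  let b := stdOrthonormalBasis ℝ E
  refine ⟨univ.image b, ?_, ?_⟩
  · show Orthonormal ℝ (Subtype.val : ↥((univ.image b : Finset E) : Set E) → E)
    rw [coe_image, coe_univ, Set.image_univ,
      orthonormal_subtype_range b.orthonormal.linearIndependent.injective]
    exact b.orthonormal
  · rw [card_image_of_injective _ b.orthonormal.linearIndependent.injective, card_univ,
      Fintype.card_fin]

theorem pairwise_sqrt_two_le_dist_union_neg [DecidableEq E] {H : Finset E}
    (hH : Orthonormal ℝ ((↑) : H → E)) :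
    ((H ∪ -H : Finset E) : Set E).Pairwise fun x y => √2 ≤ dist x y := by
  intro x hx y hy hxy
  rw [Real.sqrt_le_left dist_nonneg, dist_eq_norm, norm_sub_sq_real,
    norm_eq_one_of_mem_union_neg hH hx, norm_eq_one_of_mem_union_neg hH hy]
  linarith [pairwise_inner_nonpos_union_neg hH hx hy hxy]

theorem inner_nonpos_of_sqrt_two_le_dist {u v : E} (hu : ‖u‖ ≤ 1) (hv : ‖v‖ ≤ 1)
    (h : √2 ≤ dist u v) : ⟪u, v⟫ ≤ 0 := by
  rw [Real.sqrt_le_left dist_nonneg, dist_eq_norm, norm_sub_sq_real] at h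
  nlinarith [norm_nonneg u, norm_nonneg v]

theorem one_le_norm_of_sqrt_two_le_dist {u v : E} (hv : ‖v‖ ≤ 1) (huv : ⟪u, v⟫ = 0)
    (h : √2 ≤ dist u v) : 1 ≤ ‖u‖ := by
  rw [Real.sqrt_le_left dist_nonneg, dist_eq_norm, norm_sub_sq_real, huv] at h
  nlinarith [norm_nonneg u, norm_nonneg v]

theorem inner_eq_zero_of_neg_smul_mem {S : Finset E}
    (hS : (S : Set E).Pairwise fun x y => ⟪x, y⟫ ≤ 0) {u x : E} {a : ℝ} (hu : u ∈ S)
    (ha : a < 0) (hau : a • u ∈ S) (hx : x ∈ S) (hxu : x ≠ u) (hxa : x ≠ a • u) :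
    ⟪u, x⟫ = 0 := by
  have h₁ : ⟪u, x⟫ ≤ 0 := hS hu hx hxu.symm
  have h₂ : ⟪a • u, x⟫ ≤ 0 := hS hau hx hxa.symm
  rw [real_inner_smul_left] at h₂
  nlinarith

theorem exists_orthonormal_eq_union_neg_of_sqrt_two_le_dist [FiniteDimensional ℝ E]
    [DecidableEq E] {S : Finset E} (hdim : 2 ≤ finrank ℝ E) (hcard : #S = 2 * finrank ℝ E)
    (hball : ∀ v ∈ S, ‖v‖ ≤ 1) (hdist : (S : Set E).Pairwise fun u v => √2 ≤ dist u v) :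
    ∃ H : Finset E, Orthonormal ℝ ((↑) : H → E) ∧ S = H ∪ -H := by
  have hS : (S : Set E).Pairwise fun x y => ⟪x, y⟫ ≤ 0 := fun u hu v hv huv =>
    inner_nonpos_of_sqrt_two_le_dist (hball u hu) (hball v hv) (hdist hu hv huv)
  have h0 : (0 : E) ∉ S := by
    intro h0
    obtain ⟨v, hv, hv0⟩ := exists_mem_ne (by omega : 1 < #S) 0
    have : √2 ≤ dist 0 v := hdist h0 hv hv0.symm
    rw [dist_zero_left] at this
    linarith [hball v hv, Real.one_lt_sqrt_two]
  have hpartner := fun u (hu : u ∈ S) =>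
    exists_neg_smul_mem_of_card_eq_two_mul_finrank h0 hS hcard hu
  have hnorm : ∀ u ∈ S, ‖u‖ = 1 := by
    intro u hu
    obtain ⟨a, ha, hau⟩ := hpartner u hu
    obtain ⟨x, hx, hxua⟩ := exists_mem_notMem_of_card_lt_card (s := {u, a • u}) (t := S)
      (by have := card_le_two (a := u) (b := a • u); omega)
    simp only [mem_insert, mem_singleton, not_or] at hxua
    exact le_antisymm (hball u hu) <| one_le_norm_of_sqrt_two_le_dist (hball x hx)
      (inner_eq_zero_of_neg_smul_mem hS hu ha hau hx hxua.1 hxua.2) (hdist hu hx (Ne.symm hxua.1))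
  have hneg : ∀ u ∈ S, -u ∈ S := by
    intro u hu
    obtain ⟨a, ha, hau⟩ := hpartner u hu
    have : |a| = 1 := by simpa [norm_smul, hnorm u hu] using hnorm _ hau
    have ha1 : a = -1 := by rw [abs_of_neg ha] at this; linarith
    rwa [ha1, neg_one_smul] at hau
  refine exists_orthonormal_eq_union_neg hnorm hneg fun x hx y hy hxy hyx => ?_
  exact inner_eq_zero_of_neg_smul_mem hS hx (a := -1) (by norm_num) (by simpa using hneg x hx) hy
    (Ne.symm hxy) (by simpa using hyx)

theorem le_minPairDist {n : ℕ} {W : Finset (EuclideanSpace ℝ (Fin n))} {d : ℝ} (hW : 1 < #W)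
    (h : (W : Set (EuclideanSpace ℝ (Fin n))).Pairwise fun u v => d ≤ dist u v) :
    d ≤ minPairDist W := by
  obtain ⟨u, hu, v, hv, huv⟩ := one_lt_card.mp hW
  refine le_csInf ⟨_, u, hu, v, hv, huv, rfl⟩ ?_
  rintro _ ⟨u, hu, v, hv, huv, rfl⟩
  exact h hu hv huv

theorem minPairDist_le_dist {n : ℕ} {V : Finset (EuclideanSpace ℝ (Fin n))}
    {u v : EuclideanSpace ℝ (Fin n)} (hu : u ∈ V) (hv : v ∈ V) (huv : u ≠ v) :
    minPairDist V ≤ dist u v :=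
  csInf_le ⟨0, by rintro _ ⟨_, _, _, _, _, rfl⟩; exact dist_nonneg⟩ ⟨u, hu, v, hv, huv, rfl⟩

theorem cross_polytope_maximizes_min_distance (n : ℕ) (hn : 2 ≤ n)
    (V : Finset (EuclideanSpace ℝ (Fin n)))
    (hcard : V.card = 2 * n)
    (hball : ∀ v ∈ V, ‖v‖ ≤ 1)
    (hmax : ∀ W : Finset (EuclideanSpace ℝ (Fin n)), W.card = 2 * n →
      (∀ w ∈ W, ‖w‖ ≤ 1) → minPairDist W ≤ minPairDist V) :
    ∃ b : OrthonormalBasis (Fin n) ℝ (EuclideanSpace ℝ (Fin n)),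
      (V : Set (EuclideanSpace ℝ (Fin n))) =
        Set.range (fun i => b i) ∪ Set.range (fun i => -b i) := by
  classical
  obtain ⟨H₀, hH₀, hH₀card⟩ := exists_orthonormal_card_eq_finrank (E := EuclideanSpace ℝ (Fin n))
  rw [finrank_euclideanSpace_fin] at hH₀card
  have hcross : #(H₀ ∪ -H₀) = 2 * n := by rw [card_union_neg_of_orthonormal hH₀, hH₀card]
  have hV : (V : Set (EuclideanSpace ℝ (Fin n))).Pairwise fun u v => √2 ≤ dist u v :=
    fun u hu v hv huv => calc
      √2 ≤ minPairDist (H₀ ∪ -H₀) :=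
        le_minPairDist (by omega) (pairwise_sqrt_two_le_dist_union_neg hH₀)
      _ ≤ minPairDist V := hmax _ hcross fun w hw => (norm_eq_one_of_mem_union_neg hH₀ hw).le
      _ ≤ dist u v := minPairDist_le_dist hu hv huv
  obtain ⟨H, hH, rfl⟩ := exists_orthonormal_eq_union_neg_of_sqrt_two_le_dist
    (by rwa [finrank_euclideanSpace_fin]) (by rwa [finrank_euclideanSpace_fin]) hball hV
  rw [card_union_neg_of_orthonormal hH] at hcard
  obtain ⟨b, hb⟩ := exists_orthonormalBasis_range_eq (ι := Fin n) hH
    (by rw [Fintype.card_fin]; omega) (by simp)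
  exact ⟨b, by rw [coe_union, coe_neg, ← hb, Set.neg_range]⟩
end

section
/- Any set of n+2 points in the closed unit ball of ℝⁿ contains two distinct points at distance at most √2. -/
/-!
If all pairwise distances exceeded `√2`, then, the points lying in the unit ball, all pairwise
inner products would be negative. But `n`-dimensional space holds at most `n + 1` vectors with
pairwise negative inner products: projecting the others onto the orthogonal complement of one of
them, `u`, keeps their inner products negative, since
`⟪Px, Py⟫ = ⟪x, y⟫ - ⟪u, x⟫ ⟪u, y⟫ / ‖u‖²`, and lowers the dimension by one.
-/

open Module RealInnerProductSpace

section Obtuse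

variable {E : Type*} [NormedAddCommGroup E] [InnerProductSpace ℝ E]

theorem inner_orthogonalProjectionOnto_orthogonal_singleton (u x y : E) :
    ⟪((ℝ ∙ u)ᗮ.orthogonalProjectionOnto x : E), (ℝ ∙ u)ᗮ.orthogonalProjectionOnto y⟫ =
      ⟪x, y⟫ - ⟪u, x⟫ * ⟪u, y⟫ / ‖u‖ ^ 2 := by
  rcases eq_or_ne u 0 with rfl | hu
  · simp [Submodule.starProjection_top]
  have hu2 : ‖u‖ ^ 2 ≠ 0 := by positivity
  simp only [← Submodule.starProjection_apply, Submodule.starProjection_orthogonal_val,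
    Submodule.starProjection_singleton, inner_sub_left, inner_sub_right, real_inner_smul_left,
    real_inner_smul_right, real_inner_self_eq_norm_sq, real_inner_comm x u,
    RCLike.ofReal_real_eq_id, id]
  field_simp
  ring

theorem inner_orthogonalProjectionOnto_orthogonal_singleton_neg {u x y : E}
    (hux : ⟪u, x⟫ < 0) (huy : ⟪u, y⟫ < 0) (hxy : ⟪x, y⟫ < 0) :
    ⟪(ℝ ∙ u)ᗮ.orthogonalProjectionOnto x, (ℝ ∙ u)ᗮ.orthogonalProjectionOnto y⟫ < 0 := by
  rw [Submodule.coe_inner, inner_orthogonalProjectionOnto_orthogonal_singleton]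
  have hcorr : 0 ≤ ⟪u, x⟫ * ⟪u, y⟫ / ‖u‖ ^ 2 :=
    div_nonneg (mul_pos_of_neg_of_neg hux huy).le (sq_nonneg _)
  linarith

theorem Finset.card_le_finrank_add_one_of_pairwise_inner_neg [FiniteDimensional ℝ E] {ι : Type*}
    (s : Finset ι) (v : ι → E) (hs : (s : Set ι).Pairwise fun i j => ⟪v i, v j⟫ < 0) :
    s.card ≤ finrank ℝ E + 1 := by
  classical
  induction hn : finrank ℝ E using Nat.strong_induction_on generalizing E s with
  | _ n ih =>
  rcases le_or_gt s.card 1 with hs1 | hs1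
  · omega
  obtain ⟨i, hi, j, hj, hij⟩ := Finset.one_lt_card.mp hs1
  have hvi : v i ≠ 0 := fun h0 => by simpa [h0] using hs hi hj hij
  set K := (ℝ ∙ v i)ᗮ
  have hK : finrank ℝ K + 1 = n := by
    rw [← hn, ← (ℝ ∙ v i).finrank_add_finrank_orthogonal, finrank_span_singleton hvi, add_comm]
  have hproj : ((s.erase i : Finset ι) : Set ι).Pairwise fun j k =>
      ⟪K.orthogonalProjectionOnto (v j), K.orthogonalProjectionOnto (v k)⟫ < 0 := by
    intro j hj k hk hjk
    rw [Finset.coe_erase] at hj hk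
    exact inner_orthogonalProjectionOnto_orthogonal_singleton_neg (hs hi hj.1 (Ne.symm hj.2))
      (hs hi hk.1 (Ne.symm hk.2)) (hs hj.1 hk.1 hjk)
  have hcard := ih _ (by omega) (s.erase i) (K.orthogonalProjectionOnto ∘ v) hproj rfl
  rw [Finset.card_erase_of_mem hi] at hcard
  omega

theorem inner_neg_of_sqrt_two_lt_dist {x y : E} (hx : ‖x‖ ≤ 1) (hy : ‖y‖ ≤ 1)
    (hxy : √2 < dist x y) : ⟪x, y⟫ < 0 := by
  have hdist : 2 < ‖x‖ ^ 2 - 2 * ⟪x, y⟫ + ‖y‖ ^ 2 := by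
    rw [← norm_sub_sq_real, ← dist_eq_norm, ← Real.sq_sqrt zero_le_two]
    gcongr
  nlinarith [norm_nonneg x, norm_nonneg y]

end Obtuse

theorem exists_close_pair_of_card_n_add_two (n : ℕ)
    (P : Finset (EuclideanSpace ℝ (Fin n)))
    (hcard : P.card = n + 2)
    (hball : ∀ p ∈ P, ‖p‖ ≤ 1) :
    ∃ p ∈ P, ∃ q ∈ P, p ≠ q ∧ dist p q ≤ Real.sqrt 2 := by
  by_contra! hfar
  have hobtuse : (P : Set (EuclideanSpace ℝ (Fin n))).Pairwise fun p q => ⟪p, q⟫ < 0 :=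
    fun p hp q hq hpq =>
      inner_neg_of_sqrt_two_lt_dist (hball p hp) (hball q hq) (hfar p hp q hq hpq)
  have hcard_le := P.card_le_finrank_add_one_of_pairwise_inner_neg id hobtuse
  rw [finrank_euclideanSpace_fin] at hcard_le
  omega
end

section
/- Let A be a subset of the unit sphere of ℝⁿ, let L be the linear span of A with dim L = k, and suppose the origin lies in the interior of the convex hull of A relative to L. Then the intersection over x ∈ A of the half-spaces {y : ⟨x,y⟩ ≤ 0} equals the orthogonal complement L⊥, an (n−k)-dimensional linear subspace; in particular it coincides with the intersection of the hyperplanes {y : ⟨x,y⟩ = 0}. -/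
/-!
If `⟪x, y⟫ ≤ 0` for all `x ∈ A`, the same holds on `convexHull ℝ A`, hence on a neighbourhood of
the origin in `L`. A linear functional that is `≤ 0` near the origin vanishes (test it at `t • u`
and `t • (-u)` for small `t > 0`), so `y ⊥ L`.
-/

open Filter Topology Submodule

theorem LinearMap.eq_zero_of_eventually_nonpos {E : Type*} [AddCommGroup E] [Module ℝ E]
    [TopologicalSpace E] [ContinuousSMul ℝ E] (f : E →ₗ[ℝ] ℝ) (hf : ∀ᶠ v in 𝓝 0, f v ≤ 0) :
    f = 0 := by
  ext u
  have hsmul : ∀ w : E, Tendsto (fun t : ℝ => t • w) (𝓝[>] 0) (𝓝 0) := fun w =>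
    ((continuous_id.smul continuous_const).tendsto' 0 0 (zero_smul ℝ w)).mono_left
      nhdsWithin_le_nhds
  obtain ⟨t, ht, hpos, hneg⟩ := (eventually_mem_nhdsWithin.and
    (((hsmul u).eventually hf).and ((hsmul (-u)).eventually hf))).exists
  simp only [map_smul, map_neg, smul_eq_mul] at hpos hneg
  simp only [LinearMap.zero_apply]
  nlinarith [Set.mem_Ioi.mp ht]

variable {E : Type*} [NormedAddCommGroup E] [InnerProductSpace ℝ E]

theorem Submodule.mem_orthogonal_of_inner_nonpos (K : Submodule ℝ E) {s : Set E}
    (hs : (0 : K) ∈ interior (Subtype.val ⁻¹' s)) {y : E} (hy : ∀ z ∈ s, inner ℝ z y ≤ (0 : ℝ)) :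
    y ∈ Kᗮ := by
  have hf := LinearMap.eq_zero_of_eventually_nonpos ((innerₗ E y).comp K.subtype)
    (mem_of_superset (mem_interior_iff_mem_nhds.mp hs) fun z hz => by
      simpa [real_inner_comm] using hy z hz)
  rw [mem_orthogonal']
  intro u hu
  exact LinearMap.congr_fun hf ⟨u, hu⟩

theorem Submodule.mem_orthogonal_span_iff (A : Set E) (v : E) :
    v ∈ (span ℝ A)ᗮ ↔ ∀ u ∈ A, inner ℝ u v = (0 : ℝ) := by
  refine ⟨fun h u hu => (mem_orthogonal _ v).mp h u (subset_span hu), fun h => ?_⟩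
  rw [mem_orthogonal]
  intro u hu
  induction hu using span_induction with
  | mem x hx => exact h x hx
  | zero => simp
  | add x y _ _ hx hy => simp [inner_add_left, hx, hy]
  | smul c x _ hx => simp [real_inner_smul_left, hx]

theorem iInter_inner_eq_zero_eq_orthogonal_span (A : Set E) :
    ⋂ x ∈ A, {y : E | inner ℝ x y = (0 : ℝ)} = ((span ℝ A)ᗮ : Set E) := by
  ext y
  simp [mem_orthogonal_span_iff]

theorem iInter_inner_nonpos_eq_orthogonal_span (A : Set E)
    (h0 : (0 : span ℝ A) ∈ interior (Subtype.val ⁻¹' convexHull ℝ A)) :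
    ⋂ x ∈ A, {y : E | inner ℝ x y ≤ (0 : ℝ)} = ((span ℝ A)ᗮ : Set E) := by
  ext y
  simp only [Set.mem_iInter, Set.mem_ofPred_eq, SetLike.mem_coe]
  refine ⟨fun hy => (span ℝ A).mem_orthogonal_of_inner_nonpos h0 fun z hz => ?_,
    fun hy x hx => ((mem_orthogonal_span_iff A y).mp hy x hx).le⟩
  exact convexHull_min hy (convex_halfSpace_le (f := fun z => inner ℝ z y)
    ⟨fun a b => inner_add_left a b y, fun c a => real_inner_smul_left a y c⟩ 0) hz

theorem inter_halfspaces_eq_orthogonal_complement_general (n k : ℕ)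
    (A : Set (EuclideanSpace ℝ (Fin n)))
    (L : Submodule ℝ (EuclideanSpace ℝ (Fin n)))
    (hL : L = Submodule.span ℝ A)
    (hk : Module.finrank ℝ L = k)
    (h0 : (0 : L) ∈ interior ((Subtype.val ⁻¹' (convexHull ℝ A)) : Set L)) :
    (⋂ x ∈ A, {y : EuclideanSpace ℝ (Fin n) | inner ℝ x y ≤ (0 : ℝ)}) = (Lᗮ : Set (EuclideanSpace ℝ (Fin n))) ∧
    Module.finrank ℝ Lᗮ = n - k ∧
    (⋂ x ∈ A, {y : EuclideanSpace ℝ (Fin n) | inner ℝ x y ≤ (0 : ℝ)}) =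
      (⋂ x ∈ A, {y : EuclideanSpace ℝ (Fin n) | inner ℝ x y = (0 : ℝ)}) := by
  subst hL
  have hhalf := iInter_inner_nonpos_eq_orthogonal_span A h0
  refine ⟨hhalf, ?_, by rw [hhalf, iInter_inner_eq_zero_eq_orthogonal_span]⟩
  have hdim := (span ℝ A).finrank_add_finrank_orthogonal
  rw [finrank_euclideanSpace_fin] at hdim
  omega

theorem inter_halfspaces_eq_orthogonal_complement (n k : ℕ)
    (A : Set (EuclideanSpace ℝ (Fin n)))
    (hA : ∀ x ∈ A, ‖x‖ = 1)
    (L : Submodule ℝ (EuclideanSpace ℝ (Fin n)))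
    (hL : L = Submodule.span ℝ A)
    (hk : Module.finrank ℝ L = k)
    (h0 : (0 : L) ∈ interior ((Subtype.val ⁻¹' (convexHull ℝ A)) : Set L)) :
    (⋂ x ∈ A, {y : EuclideanSpace ℝ (Fin n) | inner ℝ x y ≤ (0 : ℝ)}) = (Lᗮ : Set (EuclideanSpace ℝ (Fin n))) ∧
    Module.finrank ℝ Lᗮ = n - k ∧
    (⋂ x ∈ A, {y : EuclideanSpace ℝ (Fin n) | inner ℝ x y ≤ (0 : ℝ)}) =
      (⋂ x ∈ A, {y : EuclideanSpace ℝ (Fin n) | inner ℝ x y = (0 : ℝ)}) :=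
  inter_halfspaces_eq_orthogonal_complement_general n k A L hL hk h0
end

section
/- Let A be a subset of the unit sphere of ℝⁿ with the origin in the interior of the convex hull of A. Then the intersection over x ∈ A of the crescents C(x) = {y : ‖y‖ ≤ 1 and dist(x,y) ≥ √2} is empty. -/
/-!
A point `y` of the closed unit ball at distance at least `√2` from a unit vector `x` satisfies
`⟪x, y⟫ ≤ (‖y‖² - 1) / 2 ≤ 0`. So a point in every crescent puts all of `A`, hence its convex hull,
in the half-space `⟪y, ·⟫ ≤ 0`; as that hull is a neighbourhood of `0`, this forces `y = 0`,
which lies in no crescent since `dist x 0 = 1 < √2`.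
-/

open Filter Topology

variable {E : Type*} [NormedAddCommGroup E] [InnerProductSpace ℝ E]

theorem inner_nonpos_of_sqrt_two_le_dist_s9 {x y : E} (hx : ‖x‖ = 1) (hy : ‖y‖ ≤ 1)
    (hxy : Real.sqrt 2 ≤ dist x y) : inner ℝ x y ≤ 0 := by
  have h2 : 2 ≤ dist x y ^ 2 := by
    simpa [Real.sq_sqrt zero_le_two] using pow_le_pow_left₀ (Real.sqrt_nonneg 2) hxy 2
  rw [dist_eq_norm, norm_sub_sq_real, hx] at h2
  nlinarith [norm_nonneg y]

theorem eq_zero_of_inner_nonpos_of_zero_mem_interior_convexHull {A : Set E} {y : E}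
    (h0 : (0 : E) ∈ interior (convexHull ℝ A)) (hyA : ∀ x ∈ A, inner ℝ y x ≤ 0) : y = 0 := by
  set H := {z : E | inner ℝ y z ≤ 0}
  have hHull : convexHull ℝ A ⊆ H :=
    convexHull_min hyA (convex_halfSpace_le (innerₛₗ ℝ y).isLinear 0)
  have hH : H ∈ 𝓝 (0 : E) := mem_interior_iff_mem_nhds.mp (interior_mono hHull h0)
  have hlim : Tendsto (fun t : ℝ => t • y) (𝓝[>] 0) (𝓝 0) := by
    have hcont : Continuous fun t : ℝ => t • y := continuous_id.smul continuous_const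
    simpa using (hcont.tendsto 0).mono_left nhdsWithin_le_nhds
  obtain ⟨t, htH, ht⟩ := ((hlim.eventually_mem hH).and self_mem_nhdsWithin).exists
  have hty : t * ‖y‖ ^ 2 ≤ 0 := by
    simpa only [H, Set.mem_ofPred_eq, real_inner_smul_right, real_inner_self_eq_norm_sq] using htH
  simpa using nonpos_of_mul_nonpos_right hty ht

theorem inter_crescents_empty (n : ℕ) (A : Set (EuclideanSpace ℝ (Fin n)))
    (hA : ∀ x ∈ A, ‖x‖ = 1)
    (h0 : (0 : EuclideanSpace ℝ (Fin n)) ∈ interior (convexHull ℝ A)) :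
    (⋂ x ∈ A, {y : EuclideanSpace ℝ (Fin n) | ‖y‖ ≤ 1 ∧ Real.sqrt 2 ≤ dist x y}) = ∅ := by
  refine Set.eq_empty_of_forall_notMem fun y hy => ?_
  simp only [Set.mem_iInter, Set.mem_ofPred_eq] at hy
  have hy0 : y = 0 := eq_zero_of_inner_nonpos_of_zero_mem_interior_convexHull h0 fun x hx => by
    rw [real_inner_comm]
    exact inner_nonpos_of_sqrt_two_le_dist_s9 (hA x hx) (hy x hx).1 (hy x hx).2
  obtain ⟨x, hx⟩ := convexHull_nonempty_iff.mp ⟨0, interior_subset h0⟩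
  have hfar := (hy x hx).2
  rw [hy0, dist_zero_right, hA x hx] at hfar
  exact Real.one_lt_sqrt_two.not_ge hfar
end

section
/- Let A be a subset of the unit sphere of ℝⁿ, let L be the linear span of A with dim L = k, and suppose the origin lies in the relative interior (within L) of the convex hull of A. Then the intersection over x ∈ A of the crescents C(x) = {y : ‖y‖ ≤ 1, dist(x,y) ≥ √2} equals the unit sphere of the orthogonal complement L⊥, i.e., {y : ‖y‖ = 1 and y ⊥ L}. -/
open RealInnerProductSpace
set_option maxHeartbeats 1000000

theorem inter_crescents_eq_great_sphere (n k : ℕ)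
    (A : Set (EuclideanSpace ℝ (Fin n)))
    (hA : ∀ x ∈ A, ‖x‖ = 1)
    (L : Submodule ℝ (EuclideanSpace ℝ (Fin n)))
    (hL : L = Submodule.span ℝ A)
    (hk : Module.finrank ℝ L = k)
    (h0 : (0 : L) ∈ interior ((Subtype.val ⁻¹' (convexHull ℝ A)) : Set L)) :
    (⋂ x ∈ A, {y : EuclideanSpace ℝ (Fin n) | ‖y‖ ≤ 1 ∧ Real.sqrt 2 ≤ dist x y}) =
      {y : EuclideanSpace ℝ (Fin n) | ‖y‖ = 1 ∧ y ∈ Lᗮ} := by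
  have hsq2 : Real.sqrt 2 ^ 2 = 2 := Real.sq_sqrt (by norm_num)
  -- get a ball inside the preimage of the hull
  obtain ⟨ε, hε, hball⟩ := Metric.mem_nhds_iff.mp (mem_interior_iff_mem_nhds.mp h0)
  have h0' : (0 : EuclideanSpace ℝ (Fin n)) ∈ convexHull ℝ A := by
    have := interior_subset h0
    simpa using this
  have hAne : A.Nonempty := by
    by_contra hne
    rw [Set.not_nonempty_iff_eq_empty] at hne
    rw [hne, convexHull_empty] at h0'
    exact h0'
  obtain ⟨a, ha⟩ := hAne
  ext y
  simp only [Set.mem_iInter, Set.mem_setOf_eq]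
  constructor
  · intro h
    have hy1 : ‖y‖ ≤ 1 := (h a ha).1
    have key : ∀ x ∈ A, ⟪x, y⟫ ≤ (‖y‖ ^ 2 - 1) / 2 := by
      intro x hx
      have hd := (h x hx).2
      have hd2 : 2 ≤ dist x y ^ 2 := by
        nlinarith [Real.sqrt_nonneg 2, dist_nonneg (x := x) (y := y)]
      have hnorm : dist x y ^ 2 = ‖x‖ ^ 2 - 2 * ⟪x, y⟫ + ‖y‖ ^ 2 := by
        rw [dist_eq_norm, @norm_sub_sq_real]
      have hx1 := hA x hx
      nlinarith
    have hconv : Convex ℝ {v : EuclideanSpace ℝ (Fin n) | ⟪v, y⟫ ≤ (‖y‖ ^ 2 - 1) / 2} := by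
      intro u hu v hv a b hha hhb hab
      simp only [Set.mem_setOf_eq] at hu hv ⊢
      rw [inner_add_left, real_inner_smul_left, real_inner_smul_left]
      nlinarith
    have hhull : convexHull ℝ A ⊆ {v : EuclideanSpace ℝ (Fin n) | ⟪v, y⟫ ≤ (‖y‖ ^ 2 - 1) / 2} :=
      convexHull_min key hconv
    have h0c : (0 : ℝ) ≤ (‖y‖ ^ 2 - 1) / 2 := by
      have := hhull h0'
      simpa using this
    have hy : ‖y‖ = 1 := by nlinarith [norm_nonneg y]
    refine ⟨hy, ?_⟩
    -- every x in the hull satisfies ⟪x,y⟫ ≤ 0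
    have hhull0 : ∀ v ∈ convexHull ℝ A, ⟪v, y⟫ ≤ 0 := by
      intro v hv
      have := hhull hv
      simp only [Set.mem_setOf_eq, hy] at this
      linarith [this]
    have hle : ∀ z ∈ L, ⟪z, y⟫ ≤ 0 := by
      intro z hz
      rcases eq_or_ne z 0 with rfl | hz0
      · simp
      · set t : ℝ := ε / (2 * ‖z‖) with ht
        have hzpos : 0 < ‖z‖ := norm_pos_iff.mpr hz0
        have htpos : 0 < t := by positivity
        have hmem : t • (⟨z, hz⟩ : L) ∈ Metric.ball (0 : L) ε := by
          rw [Metric.mem_ball, dist_zero_right, norm_smul]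
          have : ‖(⟨z, hz⟩ : L)‖ = ‖z‖ := rfl
          rw [this, Real.norm_eq_abs, abs_of_pos htpos, ht, div_mul_eq_mul_div,
            div_lt_iff₀ (by positivity)]
          nlinarith
        have hin : (t • z : EuclideanSpace ℝ (Fin n)) ∈ convexHull ℝ A := by
          have := hball hmem
          simpa using this
        have := hhull0 _ hin
        rw [real_inner_smul_left] at this
        nlinarith
    intro z hz
    have h1 := hle z hz
    have h2 := hle (-z) (neg_mem hz)
    rw [inner_neg_left] at h2
    linarith
  · intro ⟨hy, hyo⟩
    intro x hx
    have hxL : x ∈ L := by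
      rw [hL]; exact Submodule.subset_span hx
    have hinner : ⟪x, y⟫ = 0 := (Submodule.mem_orthogonal L y).mp hyo x hxL
    have hd2 : dist x y ^ 2 = 2 := by
      rw [dist_eq_norm, @norm_sub_sq_real, hinner, hA x hx, hy]
      ring
    refine ⟨le_of_eq hy, ?_⟩
    have : dist x y = Real.sqrt 2 := by
      rw [← hd2, Real.sqrt_sq dist_nonneg]
    rw [this]
end

section
/- Let F be a finite subset of the closed unit ball of ℝⁿ with circumradius 1 such that every proper subset of F has circumradius strictly less than 1. Then the linear span of F has dimension card F − 1, every point of F has norm 1, and the origin lies in the relative interior of the convex hull of F. -/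
/-!
Translating the centre of the unit ball slightly in a direction `v` strictly shrinks the distance
to every point `q` of the sphere with `⟪q, v⟫ > 0`, and keeps points of the open ball inside it.
Since `F` fits in no smaller ball, no such `v` works for all far points at once, so by separation
`0` lies in the convex hull of the points of `F` on the unit sphere. Conversely every proper subset
lies in an open ball `ball c 1`, and points of the unit sphere in that ball have `⟪q, c⟫ > 0`, so
the convex hull of such a subset misses `0`. Hence all of `F` lies on the sphere, and `F` is a
minimal set with `0` in its convex hull: by Carathéodory it is affinely independent with `0` a
combination of its points with positive weights, which gives both the dimension count and that
`0` is in the relative interior.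
-/

/-- The circumradius of a set: the infimum of radii of closed balls containing it. -/
noncomputable def circumradius {n : ℕ} (A : Set (EuclideanSpace ℝ (Fin n))) : ℝ :=
  sInf {r : ℝ | ∃ c : EuclideanSpace ℝ (Fin n), A ⊆ Metric.closedBall c r}

open Set Metric Filter Topology
open scoped RealInnerProductSpace

section Circumradius

variable {n : ℕ} {A : Set (EuclideanSpace ℝ (Fin n))}

theorem circumradius_empty : circumradius (∅ : Set (EuclideanSpace ℝ (Fin n))) = 0 := by
  simp [circumradius]

theorem circumradius_le_of_subset_closedBall (hA : A.Nonempty) {c : EuclideanSpace ℝ (Fin n)}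
    {r : ℝ} (h : A ⊆ closedBall c r) : circumradius A ≤ r := by
  obtain ⟨a, ha⟩ := hA
  refine csInf_le ⟨0, ?_⟩ ⟨c, h⟩
  rintro s ⟨c', hc'⟩
  exact dist_nonneg.trans (hc' ha)

theorem IsCompact.circumradius_lt_of_subset_ball (hA : IsCompact A) (hne : A.Nonempty)
    {c : EuclideanSpace ℝ (Fin n)} {r : ℝ} (h : A ⊆ ball c r) : circumradius A < r := by
  obtain ⟨a, ha, hmax⟩ := hA.exists_isMaxOn hne (continuous_id.dist continuous_const).continuousOn
  exact (circumradius_le_of_subset_closedBall hne fun x hx => hmax hx).trans_lt (h ha)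

theorem Bornology.IsBounded.exists_subset_ball_of_circumradius_lt (hA : Bornology.IsBounded A)
    {r : ℝ} (h : circumradius A < r) : ∃ c, A ⊆ ball c r := by
  obtain ⟨s, hs⟩ := hA.subset_closedBall 0
  obtain ⟨s, ⟨c, hc⟩, hsr⟩ := exists_lt_of_csInf_lt
    (s := {r | ∃ c, A ⊆ closedBall c r}) ⟨s, 0, hs⟩ h
  exact ⟨c, hc.trans (closedBall_subset_ball hsr)⟩

end Circumradius

section InnerProductSpace

variable {E : Type*} [NormedAddCommGroup E] [InnerProductSpace ℝ E]

theorem eventually_norm_sub_smul_lt_norm {q v : E} (h : 0 < ⟪q, v⟫) :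
    ∀ᶠ t in 𝓝[>] (0 : ℝ), ‖q - t • v‖ < ‖q‖ := by
  have hsmall : ∀ᶠ t in 𝓝[>] (0 : ℝ), t * ‖v‖ ^ 2 < 2 * ⟪q, v⟫ := by
    have : Tendsto (fun t : ℝ => t * ‖v‖ ^ 2) (𝓝 0) (𝓝 0) :=
      Continuous.tendsto' (by fun_prop) 0 0 (zero_mul _)
    exact nhdsWithin_le_nhds (this.eventually (gt_mem_nhds (by linarith)))
  filter_upwards [hsmall, self_mem_nhdsWithin] with t ht (htpos : 0 < t)
  rw [← pow_lt_pow_iff_left₀ (norm_nonneg _) (norm_nonneg _) two_ne_zero, norm_sub_sq_real,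
    real_inner_smul_right, norm_smul, Real.norm_of_nonneg htpos.le]
  nlinarith

theorem zero_notMem_convexHull_of_norm_sub_lt_norm {S : Set E} {c : E}
    (h : ∀ x ∈ S, ‖x - c‖ < ‖x‖) : (0 : E) ∉ convexHull ℝ S := by
  have hhalf : S ⊆ {x | 0 < ⟪c, x⟫} := by
    intro x hx
    have hcloser := h x hx
    rw [← pow_lt_pow_iff_left₀ (norm_nonneg _) (norm_nonneg _) two_ne_zero,
      norm_sub_sq_real] at hcloser
    show 0 < ⟪c, x⟫
    nlinarith [norm_nonneg c, real_inner_comm c x]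
  intro h0
  have := convexHull_min hhalf (convex_halfSpace_gt (innerₛₗ ℝ c).isLinear 0) h0
  simp at this

theorem zero_mem_convexHull_filter_norm_eq [CompleteSpace E] (F : Finset E) {r : ℝ}
    (hF : ∀ q ∈ F, ‖q‖ ≤ r) (hball : ∀ c, ¬ (F : Set E) ⊆ ball c r) :
    (0 : E) ∈ convexHull ℝ (F.filter (‖·‖ = r) : Set E) := by
  by_contra h0
  obtain ⟨f, u, hf0, hfG⟩ := geometric_hahn_banach_point_closed (convex_convexHull ℝ _)
    ((F.filter (‖·‖ = r)).finite_toSet.isCompact_convexHull ℝ).isClosed h0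
  set v := (InnerProductSpace.toDual ℝ E).symm f
  have hv : ∀ q ∈ F, ‖q‖ = r → 0 < ⟪q, v⟫ := fun q hq hqr => by
    rw [real_inner_comm, InnerProductSpace.toDual_symm_apply]
    exact (map_zero f ▸ hf0).trans
      (hfG q (subset_convexHull ℝ _ (by simp [hq, hqr])))
  have hmove : ∀ q ∈ F, ∀ᶠ t in 𝓝[>] (0 : ℝ), ‖q - t • v‖ < r := by
    intro q hq
    rcases (hF q hq).lt_or_eq with hlt | heq
    · have : Tendsto (fun t : ℝ => ‖q - t • v‖) (𝓝 0) (𝓝 ‖q‖) :=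
        Continuous.tendsto' (by fun_prop) 0 _ (by simp)
      exact nhdsWithin_le_nhds (this.eventually (gt_mem_nhds hlt))
    · exact heq ▸ eventually_norm_sub_smul_lt_norm (hv q hq heq)
  obtain ⟨t, ht⟩ := ((eventually_all_finset F).2 hmove).exists
  exact hball (t • v) fun q hq => by simpa [dist_eq_norm] using ht q hq

end InnerProductSpace

section Convex

theorem span_eq_vectorSpan_of_zero_mem_affineSpan {k V : Type*} [Ring k] [AddCommGroup V]
    [Module k V] {s : Set V} (h : (0 : V) ∈ affineSpan k s) :
    Submodule.span k s = vectorSpan k s := by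
  rw [← vectorSpan_insert_eq_vectorSpan h, vectorSpan_eq_span_vsub_set_right k (mem_insert 0 s)]
  simp

variable {E ι : Type*} [NormedAddCommGroup E] [NormedSpace ℝ E] [Fintype ι]

theorem AffineBasis.affineCombination_mem_interior_convexHull (b : AffineBasis ι ℝ E)
    {w : ι → ℝ} (hw0 : ∀ i, 0 < w i) (hw1 : ∑ i, w i = 1) :
    Finset.univ.affineCombination ℝ b w ∈ interior (convexHull ℝ (range b)) := by
  rw [b.interior_convexHull]
  intro i
  rw [b.coord_apply_combination_of_mem (Finset.mem_univ i) hw1]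
  exact hw0 i

theorem AffineIndependent.zero_mem_intrinsicInterior_convexHull {z : ι → E}
    (hz : AffineIndependent ℝ z) {w : ι → ℝ} (hw0 : ∀ i, 0 < w i) (hw1 : ∑ i, w i = 1)
    (hwz : ∑ i, w i • z i = 0) : (0 : E) ∈ intrinsicInterior ℝ (convexHull ℝ (range z)) := by
  have : Nonempty ι :=
    Finset.univ_nonempty_iff.1 (Finset.nonempty_of_sum_ne_zero (hw1 ▸ one_ne_zero))
  set V := Submodule.span ℝ (range z)
  let p : ι → V := fun i => ⟨z i, Submodule.subset_span ⟨i, rfl⟩⟩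
  have hp : V.subtype ∘ p = z := rfl
  have hcomb : Finset.univ.affineCombination ℝ p w = 0 := by
    rw [Finset.affineCombination_eq_linear_combination _ _ _ hw1]
    exact V.injective_subtype (by simpa [p] using hwz)
  have hspan : Submodule.span ℝ (range p) = ⊤ := by
    apply Submodule.map_injective_of_injective V.injective_subtype
    rw [Submodule.map_span, Submodule.map_top, Submodule.range_subtype, ← range_comp, hp]
  have htop : affineSpan ℝ (range p) = ⊤ := by
    rw [AffineSubspace.affineSpan_eq_top_iff_vectorSpan_eq_top_of_nonempty ℝ V V
      (range_nonempty p), ← span_eq_vectorSpan_of_zero_mem_affineSpan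
      (hcomb ▸ affineCombination_mem_affineSpan hw1 p), hspan]
  let b : AffineBasis ι ℝ V := ⟨p, hz.of_comp V.subtype.toAffineMap, htop⟩
  have h0 : (0 : V) ∈ intrinsicInterior ℝ (convexHull ℝ (range p)) :=
    interior_subset_intrinsicInterior
      (hcomb ▸ b.affineCombination_mem_interior_convexHull hw0 hw1)
  have himg : V.subtypeₗᵢ.toAffineIsometry '' convexHull ℝ (range p) = convexHull ℝ (range z) := by
    change V.subtype '' _ = _
    rw [LinearMap.image_convexHull, ← range_comp, hp]
  rw [← himg, AffineIsometry.intrinsicInterior_image]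
  exact ⟨0, h0, rfl⟩

theorem Finset.finrank_span_eq_card_sub_one_and_zero_mem_intrinsicInterior (F : Finset E)
    (h0 : (0 : E) ∈ convexHull ℝ (F : Set E))
    (hmin : ∀ F' ⊂ F, (0 : E) ∉ convexHull ℝ (F' : Set E)) :
    Module.finrank ℝ (Submodule.span ℝ (F : Set E)) = F.card - 1 ∧
      (0 : E) ∈ intrinsicInterior ℝ (convexHull ℝ (F : Set E)) := by
  classical
  obtain ⟨ι, _, z, w, hzF, hz, hw0, hw1, hwz⟩ := eq_pos_convex_span_of_mem_convexHull h0
  have hcoe : ((Finset.univ.image z : Finset E) : Set E) = Set.range z := by simp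
  have h0z : (0 : E) ∈ convexHull ℝ (Set.range z) := by
    rw [← hwz]
    exact (convex_convexHull ℝ _).sum_mem (fun i _ => (hw0 i).le) hw1
      fun i _ => subset_convexHull ℝ _ ⟨i, rfl⟩
  obtain rfl : Finset.univ.image z = F := by
    by_contra hne
    exact hmin _ ((Finset.coe_subset.1 (hcoe ▸ hzF)).lt_of_ne hne) (hcoe ▸ h0z)
  rw [hcoe, span_eq_vectorSpan_of_zero_mem_affineSpan (convexHull_subset_affineSpan _ h0z),
    Finset.card_image_of_injective _ hz.injective]
  have hne : (Finset.univ : Finset ι).Nonempty :=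
    Finset.nonempty_of_sum_ne_zero (hw1 ▸ one_ne_zero)
  exact ⟨hz.finrank_vectorSpan (Nat.sub_add_cancel (Finset.card_pos.2 hne)).symm,
    hz.zero_mem_intrinsicInterior_convexHull hw0 hw1 hwz⟩

end Convex

theorem minimal_circumradius_one_subset (n : ℕ)
    (F : Finset (EuclideanSpace ℝ (Fin n)))
    (hball : ∀ p ∈ F, ‖p‖ ≤ 1)
    (hr : circumradius (F : Set (EuclideanSpace ℝ (Fin n))) = 1)
    (hmin : ∀ F' : Finset (EuclideanSpace ℝ (Fin n)), F' ⊂ F →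
      circumradius (F' : Set (EuclideanSpace ℝ (Fin n))) < 1) :
    Module.finrank ℝ (Submodule.span ℝ (F : Set (EuclideanSpace ℝ (Fin n)))) = F.card - 1 ∧
    (∀ p ∈ F, ‖p‖ = 1) ∧
    (0 : EuclideanSpace ℝ (Fin n)) ∈ intrinsicInterior ℝ (convexHull ℝ (F : Set (EuclideanSpace ℝ (Fin n)))) := by
  have hFne : (F : Set (EuclideanSpace ℝ (Fin n))).Nonempty :=
    Set.nonempty_iff_ne_empty.2 fun h => zero_ne_one (circumradius_empty ▸ h ▸ hr)
  have hnot_ball : ∀ c, ¬ (F : Set (EuclideanSpace ℝ (Fin n))) ⊆ ball c 1 := fun c h =>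
    (F.finite_toSet.isCompact.circumradius_lt_of_subset_ball hFne h).ne hr
  have hproper : ∀ F' ⊂ F, (∀ q ∈ F', ‖q‖ = 1) →
      (0 : EuclideanSpace ℝ (Fin n)) ∉ convexHull ℝ (F' : Set (EuclideanSpace ℝ (Fin n))) := by
    intro F' hF' hsphere
    obtain ⟨c, hc⟩ :=
      F'.finite_toSet.isBounded.exists_subset_ball_of_circumradius_lt (hmin F' hF')
    refine zero_notMem_convexHull_of_norm_sub_lt_norm (c := c) fun q hq => ?_
    rw [hsphere q hq, ← dist_eq_norm]
    exact hc hq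
  have hfar := zero_mem_convexHull_filter_norm_eq F hball hnot_ball
  have hnorm : ∀ p ∈ F, ‖p‖ = 1 := by
    by_contra! hp
    exact hproper _ (Finset.filter_ssubset.2 hp) (fun q hq => (Finset.mem_filter.1 hq).2) hfar
  rw [Finset.filter_true_of_mem hnorm] at hfar
  obtain ⟨hrank, hint⟩ := F.finrank_span_eq_card_sub_one_and_zero_mem_intrinsicInterior hfar
    fun F' hF' => hproper F' hF' fun q hq => hnorm q (hF'.subset hq)
  exact ⟨hrank, hnorm, hint⟩
end

section
/- If a set of n+2 points in ℝⁿ has circumradius at most 1, then some two distinct points among them are at distance at most √2. -/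
open RealInnerProductSpace Finset

/-- In a real inner product space of finite rank `d`, a finset of vectors with pairwise
negative inner products has cardinality at most `d + 1`. -/
lemma card_le_of_pairwise_neg_inner {E : Type*} [NormedAddCommGroup E]
    [InnerProductSpace ℝ E] [FiniteDimensional ℝ E]
    (s : Finset E) (h : ∀ x ∈ s, ∀ y ∈ s, x ≠ y → ⟪x, y⟫ < 0) :
    s.card ≤ Module.finrank ℝ E + 1 := by
  classical
  by_contra hc
  push_neg at hc
  have hne : s.Nonempty := Finset.card_pos.mp (by omega)
  obtain ⟨x₀, hx₀⟩ := hne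
  set t := s.erase x₀ with ht
  have htcard : Module.finrank ℝ E < t.card := by
    rw [ht, Finset.card_erase_of_mem hx₀]; omega
  obtain ⟨f, hf0, x, hxt, hxne⟩ :=
    Module.exists_nontrivial_relation_of_finrank_lt_card htcard
  have hts : ∀ e ∈ t, e ∈ s := fun e he => Finset.mem_of_mem_erase he
  have htne : ∀ e ∈ t, e ≠ x₀ := fun e he => Finset.ne_of_mem_erase he
  set g : E → ℝ := fun e => max (f e) 0 with hg
  set k : E → ℝ := fun e => max (-(f e)) 0 with hk
  have hgk : ∀ e, f e = g e - k e := fun e => (max_zero_sub_max_neg_zero_eq_self (f e)).symm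
  have hg0 : ∀ e, 0 ≤ g e := fun e => le_max_right _ _
  have hk0 : ∀ e, 0 ≤ k e := fun e => le_max_right _ _
  have hgkmul : ∀ e, g e * k e = 0 := by
    intro e
    rcases le_total (f e) 0 with hle | hle
    · have : g e = 0 := max_eq_right hle
      rw [this, zero_mul]
    · have : k e = 0 := max_eq_right (neg_nonpos.mpr hle)
      rw [this, mul_zero]
  set w : E := ∑ e ∈ t, g e • e with hw
  have hweq : ∑ e ∈ t, k e • e = w := by
    have : ∑ e ∈ t, g e • e - ∑ e ∈ t, k e • e = 0 := by
      rw [← Finset.sum_sub_distrib]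
      rw [← hf0]
      congr 1
      ext e
      rw [← sub_smul, ← hgk]
    rw [hw]
    linear_combination (norm := module) -this
  -- ⟪w, w⟫ ≤ 0, hence w = 0
  have hwinner : ⟪w, w⟫ ≤ 0 := by
    have heq : (⟪w, w⟫ : ℝ) = ⟪(∑ e ∈ t, g e • e), (∑ e ∈ t, k e • e)⟫ := by
      rw [hweq, hw]
    rw [heq, sum_inner]
    apply Finset.sum_nonpos
    intro e he
    rw [inner_sum]
    apply Finset.sum_nonpos
    intro e' he'
    rw [real_inner_smul_left, real_inner_smul_right]
    rcases eq_or_ne e e' with rfl | hne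
    · have h0 : g e * (k e * ⟪e, e⟫) = ⟪e, e⟫ * (g e * k e) := by ring
      rw [h0, hgkmul, mul_zero]
    · have hinner := h e (hts e he) e' (hts e' he') hne
      have : 0 ≤ g e * k e' := mul_nonneg (hg0 e) (hk0 e')
      nlinarith
  have hwzero : w = 0 := real_inner_self_nonpos.mp hwinner
  -- inner with x₀ kills g and k
  have hgzero : ∀ e ∈ t, g e = 0 := by
    intro e he
    have hsum : ∑ e ∈ t, g e * ⟪e, x₀⟫ = 0 := by
      have : ⟪w, x₀⟫ = 0 := by rw [hwzero, inner_zero_left]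
      rw [hw, sum_inner] at this
      simpa [real_inner_smul_left] using this
    have hterm : ∀ e ∈ t, g e * ⟪e, x₀⟫ ≤ 0 := fun e he =>
      mul_nonpos_of_nonneg_of_nonpos (hg0 e)
        (h e (hts e he) x₀ hx₀ (htne e he)).le
    have := (Finset.sum_eq_zero_iff_of_nonpos hterm).mp hsum e he
    have hne0 : ⟪e, x₀⟫ ≠ 0 := (h e (hts e he) x₀ hx₀ (htne e he)).ne
    exact (mul_eq_zero.mp this).resolve_right hne0
  have hkzero : ∀ e ∈ t, k e = 0 := by
    intro e he
    have hsum : ∑ e ∈ t, k e * ⟪e, x₀⟫ = 0 := by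
      have : ⟪w, x₀⟫ = 0 := by rw [hwzero, inner_zero_left]
      rw [← hweq, sum_inner] at this
      simpa [real_inner_smul_left] using this
    have hterm : ∀ e ∈ t, k e * ⟪e, x₀⟫ ≤ 0 := fun e he =>
      mul_nonpos_of_nonneg_of_nonpos (hk0 e)
        (h e (hts e he) x₀ hx₀ (htne e he)).le
    have := (Finset.sum_eq_zero_iff_of_nonpos hterm).mp hsum e he
    have hne0 : ⟪e, x₀⟫ ≠ 0 := (h e (hts e he) x₀ hx₀ (htne e he)).ne
    exact (mul_eq_zero.mp this).resolve_right hne0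
  apply hxne
  rw [hgk x, hgzero x hxt, hkzero x hxt, sub_zero]

set_option maxHeartbeats 1000000 in
theorem exists_close_pair_of_circumradius_le_one (n : ℕ)
    (P : Finset (EuclideanSpace ℝ (Fin n)))
    (hcard : P.card = n + 2)
    (hr : circumradius (P : Set (EuclideanSpace ℝ (Fin n))) ≤ 1) :
    ∃ p ∈ P, ∃ q ∈ P, p ≠ q ∧ dist p q ≤ Real.sqrt 2 := by
  by_contra hcon
  push_neg at hcon
  have hcon' : ∀ p ∈ P, ∀ q ∈ P, p ≠ q → Real.sqrt 2 < dist p q := by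
    intro p hp q hq hne; exact hcon p hp q hq hne
  have hPne : P.Nonempty := Finset.card_pos.mp (by omega)
  -- the finset of pairwise distances exceeding √2
  set D : Finset ℝ :=
    ((P ×ˢ P).image (fun pq => dist pq.1 pq.2)).filter (fun d => Real.sqrt 2 < d) with hD
  have hmemD : ∀ p ∈ P, ∀ q ∈ P, p ≠ q → dist p q ∈ D := by
    intro p hp q hq hne
    rw [hD, Finset.mem_filter]
    exact ⟨Finset.mem_image.mpr ⟨(p, q), Finset.mem_product.mpr ⟨hp, hq⟩, rfl⟩,
      hcon' p hp q hq hne⟩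
  have hDne : D.Nonempty := by
    obtain ⟨a, ha, b, hb, hab⟩ := Finset.one_lt_card.mp (show 1 < P.card by omega)
    exact ⟨dist a b, hmemD a ha b hb hab⟩
  set m : ℝ := D.min' hDne with hm
  have hmle : ∀ p ∈ P, ∀ q ∈ P, p ≠ q → m ≤ dist p q := by
    intro p hp q hq hne
    exact Finset.min'_le D _ (hmemD p hp q hq hne)
  have hmgt : Real.sqrt 2 < m := (Finset.mem_filter.mp (D.min'_mem hDne)).2
  have hsqrt2 : (0:ℝ) < Real.sqrt 2 := Real.sqrt_pos.mpr (by norm_num)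
  have hmpos : 0 < m := hsqrt2.trans hmgt
  -- choose a center with radius < m / √2
  have hS : {r : ℝ | ∃ c : EuclideanSpace ℝ (Fin n), (P : Set _) ⊆ Metric.closedBall c r}.Nonempty := by
    obtain ⟨r, hrb⟩ := (Set.Finite.isBounded (P.finite_toSet)).subset_closedBall 0
    exact ⟨r, 0, hrb⟩
  have h1lt : (1:ℝ) < m / Real.sqrt 2 := by
    rw [lt_div_iff₀ hsqrt2, one_mul]; exact hmgt
  have hlt : circumradius (P : Set (EuclideanSpace ℝ (Fin n))) < m / Real.sqrt 2 :=
    lt_of_le_of_lt hr h1lt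
  obtain ⟨r, ⟨c, hc⟩, hrlt⟩ := exists_lt_of_csInf_lt hS hlt
  have hr0 : 0 ≤ r := by
    obtain ⟨p, hp⟩ := hPne
    have := hc (Finset.mem_coe.mpr hp)
    rw [Metric.mem_closedBall] at this
    exact le_trans dist_nonneg this
  have hr2 : r ^ 2 < m ^ 2 / 2 := by
    have h2 : (Real.sqrt 2) ^ 2 = 2 := Real.sq_sqrt (by norm_num)
    have := pow_lt_pow_left₀ hrlt hr0 (n := 2) (by norm_num)
    calc r ^ 2 < (m / Real.sqrt 2) ^ 2 := this
      _ = m ^ 2 / 2 := by rw [div_pow, h2]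
  -- the translated finset
  letI : DecidableEq (EuclideanSpace ℝ (Fin n)) := Classical.decEq _
  set s : Finset (EuclideanSpace ℝ (Fin n)) := P.image (fun p => p - c) with hs
  have hsicard : s.card = n + 2 := by
    rw [hs, Finset.card_image_of_injective _ (fun a b hab => sub_left_inj.mp hab), hcard]
  have hinner : ∀ x ∈ s, ∀ y ∈ s, x ≠ y → ⟪x, y⟫ < 0 := by
    intro x hx y hy hxy
    rw [hs, Finset.mem_image] at hx hy
    obtain ⟨p, hp, rfl⟩ := hx
    obtain ⟨q, hq, rfl⟩ := hy
    have hpq : p ≠ q := fun h => hxy (by rw [h])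
    have hnormp : ‖p - c‖ ≤ r := by
      have := hc (Finset.mem_coe.mpr hp)
      rwa [Metric.mem_closedBall, dist_eq_norm] at this
    have hnormq : ‖q - c‖ ≤ r := by
      have := hc (Finset.mem_coe.mpr hq)
      rwa [Metric.mem_closedBall, dist_eq_norm] at this
    have hdist : m ≤ ‖(p - c) - (q - c)‖ := by
      have : (p - c) - (q - c) = p - q := by abel
      rw [this, ← dist_eq_norm]
      exact hmle p hp q hq hpq
    have hexp := norm_sub_sq_real (p - c) (q - c)
    have h1 : ‖p - c‖ ^ 2 ≤ r ^ 2 := pow_le_pow_left₀ (norm_nonneg _) hnormp 2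
    have h2 : ‖q - c‖ ^ 2 ≤ r ^ 2 := pow_le_pow_left₀ (norm_nonneg _) hnormq 2
    have h3 : m ^ 2 ≤ ‖(p - c) - (q - c)‖ ^ 2 := pow_le_pow_left₀ hmpos.le hdist 2
    nlinarith
  have := card_le_of_pairwise_neg_inner s hinner
  rw [hsicard, finrank_euclideanSpace_fin] at this
  omega
end

section
/- If 2n nonoverlapping unit balls are packed into a ball of radius 1+√2 in ℝⁿ (n ≥ 2), then their centers form the vertex set of a regular cross-polytope: centers = {c ± √2·eᵢ : i = 1..n} for the container's center c and some orthonormal basis e₁,...,eₙ. -/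
/-!
Translating the container's center to the origin, the vectors `v i = p i - c` have norm at most
`√2` and pairwise distance at least `2`, hence pairwise nonpositive inner products. A family of
nonzero, pairwise obtuse vectors in dimension `n` has at most `2n` members (Rankin): at most two of
them lie on the line through one of them, and the projections of the others onto the orthogonal
complement of that line are again pairwise obtuse. With exactly `2n` members, the line through
each member contains a second, antipodal one and all other members are orthogonal to it, so
induction makes every member a multiple of a vector of one orthonormal basis. As `n ≥ 2`, each
`v i` then has an orthogonal partner `v j`, and `4 ≤ ‖v i - v j‖² = ‖v i‖² + ‖v j‖² ≤ 4` forces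
`‖v i‖ = √2`.
-/

open Module Submodule
open scoped RealInnerProductSpace

theorem Set.range_eq_union_of_subset_of_card_le {α ι β γ : Type*} [Finite β] [Finite γ]
    {p : ι → α} {f : β → α} {g : γ → α} (hp : Function.Injective p)
    (hcard : Nat.card β + Nat.card γ ≤ Nat.card ι) (h : Set.range p ⊆ Set.range f ∪ Set.range g) :
    Set.range p = Set.range f ∪ Set.range g := by
  refine Set.eq_of_subset_of_ncard_le h ?_ ((Set.finite_range f).union (Set.finite_range g))
  calc (Set.range f ∪ Set.range g).ncard ≤ (Set.range f).ncard + (Set.range g).ncard :=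
        Set.ncard_union_le _ _
    _ ≤ Nat.card β + Nat.card γ := add_le_add (Finite.card_range_le f) (Finite.card_range_le g)
    _ ≤ (Set.range p).ncard := by rwa [Set.ncard_range_of_injective hp]

section

variable {E : Type*} [NormedAddCommGroup E] [InnerProductSpace ℝ E]

theorem card_le_two_of_pairwise_inner_nonpos_of_mem_span_singleton {ι : Type*} [Fintype ι]
    {u : E} {v : ι → E} (hv₀ : ∀ i, v i ≠ 0) (hvu : ∀ i, v i ∈ ℝ ∙ u)
    (hv : Pairwise fun i j => ⟪v i, v j⟫ ≤ 0) : Fintype.card ι ≤ 2 := by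
  choose s hs using fun i => mem_span_singleton.mp (hvu i)
  have hs₀ : ∀ i, s i ≠ 0 := fun i h => hv₀ i (by rw [← hs i, h, zero_smul])
  have hsign : Function.Injective fun i => decide (0 < s i) := by
    intro i j hij
    by_contra hne
    have hu : u ≠ 0 := fun h => hv₀ i (by rw [← hs i, h, smul_zero])
    have hpos : 0 < s i * s j := by
      simp only [decide_eq_decide] at hij
      rcases (hs₀ i).lt_or_gt with hi | hi
      · exact mul_pos_of_neg_of_neg hi
          (lt_of_le_of_ne (not_lt.mp (hij.not.mp hi.not_gt)) (hs₀ j))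
      · exact mul_pos hi (hij.mp hi)
    have h : ⟪v i, v j⟫ ≤ 0 := hv hne
    rw [← hs i, ← hs j, real_inner_smul_left, real_inner_smul_right,
      real_inner_self_eq_norm_sq, ← mul_assoc] at h
    exact h.not_gt (mul_pos hpos (by positivity))
  simpa using Fintype.card_le_of_injective _ hsign

theorem inner_starProjection_orthogonal_span_singleton_le {u x y : E}
    (hx : ⟪u, x⟫ ≤ 0) (hy : ⟪u, y⟫ ≤ 0) :
    ⟪(ℝ ∙ u)ᗮ.starProjection x, (ℝ ∙ u)ᗮ.starProjection y⟫ ≤ ⟪x, y⟫ := by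
  rw [inner_starProjection_left_eq_right, starProjection_eq_self_iff.mpr (by simp),
    starProjection_orthogonal_val, inner_sub_right, starProjection_singleton,
    real_inner_smul_right, real_inner_comm u x]
  have : 0 ≤ ⟪u, y⟫ / ‖u‖ ^ 2 * ⟪u, x⟫ :=
    mul_nonneg_of_nonpos_of_nonpos (div_nonpos_of_nonpos_of_nonneg hy (by positivity)) hx
  simpa using this

theorem inner_eq_zero_of_inner_nonpos_of_antipodal {u w x : E} (hw : w ∈ ℝ ∙ u) (hw₀ : w ≠ 0)
    (huw : ⟪u, w⟫ ≤ 0) (hux : ⟪u, x⟫ ≤ 0) (hwx : ⟪w, x⟫ ≤ 0) : ⟪u, x⟫ = 0 := by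
  obtain ⟨s, rfl⟩ := mem_span_singleton.mp hw
  have hu : u ≠ 0 := by rintro rfl; simp at hw₀
  rw [real_inner_smul_right, real_inner_self_eq_norm_sq] at huw
  rw [real_inner_smul_left] at hwx
  have hs : s < 0 := by
    refine lt_of_le_of_ne ?_ (by rintro rfl; simp at hw₀)
    exact nonpos_of_mul_nonpos_left huw (by positivity)
  nlinarith

theorem Orthonormal.finCons {n : ℕ} {e : Fin n → E} (he : Orthonormal ℝ e) {x : E} (hx : ‖x‖ = 1)
    (hxe : ∀ k, ⟪x, e k⟫ = 0) : Orthonormal ℝ (Fin.cons x e : Fin (n + 1) → E) := by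
  refine ⟨Fin.cases hx he.1, ?_⟩
  intro i j hij
  cases i using Fin.cases <;> cases j using Fin.cases
  · exact absurd rfl hij
  · exact hxe _
  · rw [real_inner_comm]; exact hxe _
  · exact he.2 (ne_of_apply_ne Fin.succ hij)

theorem pairwise_inner_orthogonalProjectionOnto_nonpos {ι : Type*} {v : ι → E}
    (hv : Pairwise fun i j => ⟪v i, v j⟫ ≤ 0) (i₀ : ι) :
    Pairwise fun i j : {i // v i ∉ ℝ ∙ v i₀} =>
      ⟪(ℝ ∙ v i₀)ᗮ.orthogonalProjectionOnto (v i),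
        (ℝ ∙ v i₀)ᗮ.orthogonalProjectionOnto (v j)⟫ ≤ 0 := by
  intro i j hij
  have hi₀ : ∀ k : {i // v i ∉ ℝ ∙ v i₀}, i₀ ≠ k :=
    fun k h => k.2 (h ▸ mem_span_singleton_self _)
  rw [coe_inner, ← starProjection_apply, ← starProjection_apply]
  exact (inner_starProjection_orthogonal_span_singleton_le (hv (hi₀ i)) (hv (hi₀ j))).trans
    (hv (Subtype.coe_ne_coe.mpr hij))

theorem orthogonalProjectionOnto_orthogonal_span_singleton_ne_zero {u x : E} (hx : x ∉ ℝ ∙ u) :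
    (ℝ ∙ u)ᗮ.orthogonalProjectionOnto x ≠ 0 := by
  rwa [Ne, orthogonalProjectionOnto_eq_zero_iff, orthogonal_orthogonal]

theorem card_le_two_mul_finrank_of_pairwise_inner_nonpos_s18 [FiniteDimensional ℝ E] {ι : Type*}
    [Fintype ι] {v : ι → E} (hv₀ : ∀ i, v i ≠ 0) (hv : Pairwise fun i j => ⟪v i, v j⟫ ≤ 0) :
    Fintype.card ι ≤ 2 * finrank ℝ E := by
  induction hn : finrank ℝ E generalizing E ι with
  | zero =>
    have := finrank_zero_iff.mp hn
    simp [Fintype.card_eq_zero_iff.mpr ⟨fun i => hv₀ i (Subsingleton.elim _ _)⟩]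
  | succ n ih =>
    classical
    obtain hι | ⟨⟨i₀⟩⟩ := isEmpty_or_nonempty ι
    · simp
    have : Fact (finrank ℝ E = n + 1) := ⟨hn⟩
    have hZ : Fintype.card {i // v i ∈ ℝ ∙ v i₀} ≤ 2 :=
      card_le_two_of_pairwise_inner_nonpos_of_mem_span_singleton (fun i => hv₀ i) (fun i => i.2)
        (fun i j hij => hv (Subtype.coe_ne_coe.mpr hij))
    have hN : Fintype.card {i // v i ∉ ℝ ∙ v i₀} ≤ 2 * n :=
      ih (fun i => orthogonalProjectionOnto_orthogonal_span_singleton_ne_zero i.2)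
        (pairwise_inner_orthogonalProjectionOnto_nonpos hv i₀)
        (finrank_orthogonal_span_singleton (hv₀ i₀))
    have := Fintype.card_subtype_compl (fun i => v i ∈ ℝ ∙ v i₀)
    have := Fintype.card_subtype_le (fun i => v i ∈ ℝ ∙ v i₀)
    omega

theorem exists_orthonormal_of_card_eq_two_mul_finrank [FiniteDimensional ℝ E] {ι : Type*}
    [Fintype ι] {v : ι → E} (hv₀ : ∀ i, v i ≠ 0) (hv : Pairwise fun i j => ⟪v i, v j⟫ ≤ 0)
    {n : ℕ} (hn : finrank ℝ E = n) (hcard : Fintype.card ι = 2 * n) :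
    ∃ e : Fin n → E, Orthonormal ℝ e ∧ ∀ i, ∃ k, v i ∈ ℝ ∙ e k := by
  induction n generalizing E ι with
  | zero =>
    have : IsEmpty ι := Fintype.card_eq_zero_iff.mp hcard
    exact ⟨Fin.elim0, ⟨fun k => k.elim0, fun k => k.elim0⟩, isEmptyElim⟩
  | succ n ih =>
    classical
    obtain ⟨i₀⟩ : Nonempty ι := Fintype.card_pos_iff.mp (by omega)
    set u := v i₀
    set K := (ℝ ∙ u)ᗮ
    have : Fact (finrank ℝ E = n + 1) := ⟨hn⟩
    have hZ : Fintype.card {i // v i ∈ ℝ ∙ u} ≤ 2 :=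
      card_le_two_of_pairwise_inner_nonpos_of_mem_span_singleton (fun i => hv₀ i) (fun i => i.2)
        (fun i j hij => hv (Subtype.coe_ne_coe.mpr hij))
    have hK : finrank ℝ K = n := finrank_orthogonal_span_singleton (hv₀ i₀)
    have hN : Fintype.card {i // v i ∉ ℝ ∙ u} ≤ 2 * n := hK ▸
      card_le_two_mul_finrank_of_pairwise_inner_nonpos_s18
        (fun i => orthogonalProjectionOnto_orthogonal_span_singleton_ne_zero i.2)
        (pairwise_inner_orthogonalProjectionOnto_nonpos hv i₀)
    have := Fintype.card_subtype_compl (fun i => v i ∈ ℝ ∙ u)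
    have := Fintype.card_subtype_le (fun i => v i ∈ ℝ ∙ u)
    -- `v j₀` is a negative multiple of `u`, forcing every `v i` off the line to be orthogonal to `u`
    obtain ⟨j₀, hj₀⟩ := Fintype.exists_ne_of_one_lt_card (by omega)
      (⟨i₀, mem_span_singleton_self u⟩ : {i // v i ∈ ℝ ∙ u})
    have hNK : ∀ i : {i // v i ∉ ℝ ∙ u}, v i ∈ K := by
      intro i
      have hi₀ : i₀ ≠ i := fun h => i.2 (h ▸ mem_span_singleton_self u)
      have hj₀i : (j₀ : ι) ≠ i := fun h => i.2 (h ▸ j₀.2)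
      exact mem_orthogonal_singleton_iff_inner_right.mpr <|
        inner_eq_zero_of_inner_nonpos_of_antipodal j₀.2 (hv₀ j₀)
          (hv fun h => hj₀ (Subtype.ext h.symm)) (hv hi₀) (hv hj₀i)
    obtain ⟨e', he', hve'⟩ :=
      ih (v := fun i : {i // v i ∉ ℝ ∙ u} => K.orthogonalProjectionOnto (v i))
        (fun i => orthogonalProjectionOnto_orthogonal_span_singleton_ne_zero i.2)
        (pairwise_inner_orthogonalProjectionOnto_nonpos hv i₀) hK (by omega)
    refine ⟨Fin.cons (‖u‖⁻¹ • u) (fun k => (e' k : E)),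
      (he'.comp_linearIsometry K.subtypeₗᵢ).finCons (norm_smul_inv_norm (hv₀ i₀)) fun k => ?_,
      fun i => ?_⟩
    · show ⟪‖u‖⁻¹ • u, (e' k : E)⟫ = 0
      rw [real_inner_smul_left, mem_orthogonal_singleton_iff_inner_right.mp (e' k).2, mul_zero]
    by_cases hi : v i ∈ ℝ ∙ u
    · refine ⟨0, ?_⟩
      rwa [Fin.cons_zero,
        span_singleton_smul_eq (inv_ne_zero (norm_ne_zero_iff.mpr (hv₀ i₀))).isUnit]
    · obtain ⟨k, hk⟩ := hve' ⟨i, hi⟩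
      obtain ⟨a, ha⟩ := mem_span_singleton.mp hk
      refine ⟨k.succ, mem_span_singleton.mpr ⟨a, ?_⟩⟩
      rw [Fin.cons_succ, ← coe_smul, ha,
        orthogonalProjectionOnto_mem_subspace_eq_self ⟨v i, hNK ⟨i, hi⟩⟩]

theorem two_mul_sq_le_of_sqrt_two_mul_le_norm_sub {x y : E} {r : ℝ} (hr : 0 ≤ r)
    (hxy : √2 * r ≤ ‖x - y‖) : 2 * r ^ 2 ≤ ‖x‖ ^ 2 - 2 * ⟪x, y⟫ + ‖y‖ ^ 2 := by
  rw [← norm_sub_sq_real]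
  calc 2 * r ^ 2 = (√2 * r) ^ 2 := by rw [mul_pow, Real.sq_sqrt zero_le_two]
    _ ≤ ‖x - y‖ ^ 2 := pow_le_pow_left₀ (by positivity) hxy 2

theorem inner_nonpos_of_norm_le_of_le_norm_sub {x y : E} {r : ℝ} (hx : ‖x‖ ≤ r) (hy : ‖y‖ ≤ r)
    (hxy : √2 * r ≤ ‖x - y‖) : ⟪x, y⟫ ≤ 0 := by
  have hr : 0 ≤ r := (norm_nonneg x).trans hx
  have := two_mul_sq_le_of_sqrt_two_mul_le_norm_sub hr hxy
  nlinarith [pow_le_pow_left₀ (norm_nonneg x) hx 2, pow_le_pow_left₀ (norm_nonneg y) hy 2]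

theorem norm_eq_of_inner_eq_zero_of_le_norm_sub {x y : E} {r : ℝ} (hx : ‖x‖ ≤ r) (hy : ‖y‖ ≤ r)
    (hxy : √2 * r ≤ ‖x - y‖) (hxy₀ : ⟪x, y⟫ = 0) : ‖x‖ = r := by
  have hr : 0 ≤ r := (norm_nonneg x).trans hx
  have := two_mul_sq_le_of_sqrt_two_mul_le_norm_sub hr hxy
  refine (sq_eq_sq₀ (norm_nonneg x) hr).mp ?_
  nlinarith [pow_le_pow_left₀ (norm_nonneg x) hx 2, pow_le_pow_left₀ (norm_nonneg y) hy 2]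

theorem exists_orthonormal_forall_eq_smul_or_eq_neg_smul [FiniteDimensional ℝ E] {n : ℕ}
    (hE : finrank ℝ E = n) (hn : 2 ≤ n) {ι : Type*} [Fintype ι] (hcard : Fintype.card ι = 2 * n)
    {r : ℝ} (hr : 0 < r) {v : ι → E} (hle : ∀ i, ‖v i‖ ≤ r)
    (hsep : Pairwise fun i j => √2 * r ≤ ‖v i - v j‖) :
    ∃ e : Fin n → E, Orthonormal ℝ e ∧ ∀ i, ∃ k, v i = r • e k ∨ v i = -(r • e k) := by
  have hv₀ : ∀ i, v i ≠ 0 := by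
    intro i hi
    obtain ⟨j, hj⟩ := Fintype.exists_ne_of_one_lt_card (by omega) i
    have : √2 * r ≤ ‖v j - v i‖ := hsep hj
    rw [hi, sub_zero] at this
    nlinarith [hle j, Real.one_lt_sqrt_two]
  have hv : Pairwise fun i j => ⟪v i, v j⟫ ≤ 0 := fun i j hij =>
    inner_nonpos_of_norm_le_of_le_norm_sub (hle i) (hle j) (hsep hij)
  obtain ⟨e, he, hve⟩ := exists_orthonormal_of_card_eq_two_mul_finrank hv₀ hv hE hcard
  choose k hk using hve
  -- a line carries at most two of the `v i`, so each has another one orthogonal to it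
  have hpartner : ∀ i, ∃ j, k j ≠ k i := by
    intro i
    by_contra! h
    have := card_le_two_of_pairwise_inner_nonpos_of_mem_span_singleton hv₀
      (fun j => h j ▸ hk j) hv
    omega
  refine ⟨e, he, fun i => ⟨k i, ?_⟩⟩
  obtain ⟨j, hj⟩ := hpartner i
  obtain ⟨s, hs⟩ := mem_span_singleton.mp (hk i)
  obtain ⟨t, ht⟩ := mem_span_singleton.mp (hk j)
  have horth : ⟪v i, v j⟫ = 0 := by
    rw [← hs, ← ht, real_inner_smul_left, real_inner_smul_right, he.2 hj.symm, mul_zero, mul_zero]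
  have hnorm := norm_eq_of_inner_eq_zero_of_le_norm_sub (hle i) (hle j)
    (hsep fun h => hj (h ▸ rfl)) horth
  rw [← hs, norm_smul, he.1, mul_one, Real.norm_eq_abs] at hnorm
  rcases (abs_eq hr.le).mp hnorm with h | h
  · exact .inl (by rw [← hs, h])
  · exact .inr (by rw [← hs, h, neg_smul])

theorem exists_orthonormalBasis_range_eq_cross_polytope [FiniteDimensional ℝ E] {n : ℕ}
    (hE : finrank ℝ E = n) (hn : 2 ≤ n) {ι : Type*} [Fintype ι] (hcard : Fintype.card ι = 2 * n)
    {r : ℝ} (hr : 0 < r) {c : E} {p : ι → E} (hin : ∀ i, dist c (p i) ≤ r)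
    (hsep : Pairwise fun i j => √2 * r ≤ dist (p i) (p j)) :
    ∃ b : OrthonormalBasis (Fin n) ℝ E,
      Set.range p = Set.range (fun i => c + r • b i) ∪ Set.range (fun i => c - r • b i) := by
  obtain ⟨e, he, hpe⟩ := exists_orthonormal_forall_eq_smul_or_eq_neg_smul hE hn hcard hr
    (v := fun i => p i - c) (fun i => by rw [← dist_eq_norm, dist_comm]; exact hin i)
    fun i j hij => (hsep hij).trans_eq (by rw [sub_sub_sub_cancel_right, dist_eq_norm])
  have : Nonempty (Fin n) := ⟨⟨0, by omega⟩⟩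
  let b := (basisOfOrthonormalOfCardEqFinrank he (by simp [hE])).toOrthonormalBasis
    (by simpa using he)
  have hb : ⇑b = e := by simp [b]
  refine ⟨b, Set.range_eq_union_of_subset_of_card_le (fun i j hij => ?_)
    (by simp [hcard]; omega) ?_⟩
  · by_contra hne
    have : √2 * r ≤ dist (p i) (p j) := hsep hne
    rw [hij, dist_self] at this
    nlinarith [Real.one_lt_sqrt_two]
  · rintro _ ⟨i, rfl⟩
    obtain ⟨k, h | h⟩ := hpe i
    · exact .inl ⟨k, by simp only [hb, ← h, add_sub_cancel]⟩
    · exact .inr ⟨k, by simp only [hb, ← neg_eq_iff_eq_neg.mpr h, neg_sub, sub_sub_cancel]⟩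

end

theorem packing_centers_form_cross_polytope (n : ℕ) (hn : 2 ≤ n)
    (c : EuclideanSpace ℝ (Fin n))
    (p : Fin (2 * n) → EuclideanSpace ℝ (Fin n))
    (hin : ∀ i, dist c (p i) ≤ Real.sqrt 2)
    (hsep : ∀ i j, i ≠ j → 2 ≤ dist (p i) (p j)) :
    ∃ b : OrthonormalBasis (Fin n) ℝ (EuclideanSpace ℝ (Fin n)),
      Set.range p =
        Set.range (fun i => c + Real.sqrt 2 • b i) ∪
        Set.range (fun i => c - Real.sqrt 2 • b i) := by
  refine exists_orthonormalBasis_range_eq_cross_polytope finrank_euclideanSpace_fin hn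
    (Fintype.card_fin _) (Real.sqrt_pos.mpr two_pos) hin fun i j hij => ?_
  rw [Real.mul_self_sqrt zero_le_two]
  exact hsep i j hij
end

section
/- For k ≤ n+1, the smallest radius of a ball in ℝⁿ containing k nonoverlapping unit balls equals 1 + √(2 − 2/k), achieved when the centers form a regular (k−1)-simplex inscribed in the concentric sphere of radius √(2 − 2/k). -/
/-!
If `k` points `p i` are pairwise at distance at least `2` and lie in the ball of radius `ρ`, then
`∑ i, ∑ j, ‖p i - p j‖ ^ 2 = 2 k ∑ i, ‖p i‖ ^ 2 - 2 ‖∑ i, p i‖ ^ 2 ≤ 2 k² ρ²`, while each of the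
`k (k - 1)` off-diagonal terms is at least `4`; hence `ρ² ≥ 2 - 2 / k`. Equality is attained by the
vertices `√2 e i` of the standard simplex in `ℝᵏ` translated to have centroid `0`: they lie in the
hyperplane orthogonal to `∑ j, e j`, of dimension `k - 1 ≤ n`, which embeds isometrically in `ℝⁿ`.
-/

open Finset Module RealInnerProductSpace

theorem exists_linearIsometry_of_finrank_le {𝕜 F E : Type*} [RCLike 𝕜]
    [NormedAddCommGroup F] [InnerProductSpace 𝕜 F] [FiniteDimensional 𝕜 F]
    [NormedAddCommGroup E] [InnerProductSpace 𝕜 E] [FiniteDimensional 𝕜 E]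
    (h : finrank 𝕜 F ≤ finrank 𝕜 E) : Nonempty (F →ₗᵢ[𝕜] E) := by
  let bF := stdOrthonormalBasis 𝕜 F
  let bE := stdOrthonormalBasis 𝕜 E
  let f := bF.toBasis.constr 𝕜 (bE ∘ Fin.castLE h)
  have hbF : Orthonormal 𝕜 bF.toBasis := by simp [bF.orthonormal]
  have hf : f ∘ bF.toBasis = bE ∘ Fin.castLE h := funext fun i => by simp [f]
  exact ⟨f.isometryOfOrthonormal hbF (hf ▸ bE.orthonormal.comp _ (Fin.castLE_injective h))⟩

section CenteredSimplex

variable {E ι : Type*} [NormedAddCommGroup E] [InnerProductSpace ℝ E] {e : ι → E}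

theorem Orthonormal.norm_sub_sq (he : Orthonormal ℝ e) {i j : ι} (hij : i ≠ j) :
    ‖e i - e j‖ ^ 2 = 2 := by
  rw [norm_sub_sq_real, he.1 i, he.1 j, he.2 hij]
  norm_num

variable [Fintype ι]

theorem Orthonormal.inner_sum_right (he : Orthonormal ℝ e) (i : ι) : ⟪e i, ∑ j, e j⟫ = 1 := by
  simpa using he.inner_right_fintype (fun _ => 1) i

theorem Orthonormal.norm_sum_sq (he : Orthonormal ℝ e) :
    ‖∑ j, e j‖ ^ 2 = Fintype.card ι := by
  rw [← real_inner_self_eq_norm_sq, sum_inner]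
  simp [he.inner_sum_right]

noncomputable def centeredSimplex (e : ι → E) (i : ι) : E :=
  √2 • (e i - (Fintype.card ι : ℝ)⁻¹ • ∑ j, e j)

theorem inner_centeredSimplex_sum (he : Orthonormal ℝ e) (i : ι) :
    ⟪centeredSimplex e i, ∑ j, e j⟫ = 0 := by
  have hk : (Fintype.card ι : ℝ) ≠ 0 := Nat.cast_ne_zero.2 (Fintype.card_pos_iff.2 ⟨i⟩).ne'
  rw [centeredSimplex, inner_smul_left, inner_sub_left, real_inner_smul_left,
    real_inner_self_eq_norm_sq, he.norm_sum_sq, he.inner_sum_right, inv_mul_cancel₀ hk]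
  simp

theorem norm_centeredSimplex (he : Orthonormal ℝ e) (i : ι) :
    ‖centeredSimplex e i‖ = √(2 - 2 / Fintype.card ι) := by
  have hk : (Fintype.card ι : ℝ) ≠ 0 := Nat.cast_ne_zero.2 (Fintype.card_pos_iff.2 ⟨i⟩).ne'
  rw [← Real.sqrt_sq (norm_nonneg _), centeredSimplex, norm_smul, mul_pow, norm_sub_sq_real,
    real_inner_smul_right, norm_smul, mul_pow, he.norm_sum_sq, he.inner_sum_right, he.1 i]
  congr 1
  rw [Real.norm_of_nonneg (Real.sqrt_nonneg 2), Real.sq_sqrt zero_le_two,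
    Real.norm_of_nonneg (by positivity)]
  field_simp
  ring

theorem dist_centeredSimplex (he : Orthonormal ℝ e) {i j : ι} (hij : i ≠ j) :
    dist (centeredSimplex e i) (centeredSimplex e j) = 2 := by
  rw [dist_eq_norm, centeredSimplex, centeredSimplex, ← smul_sub, sub_sub_sub_cancel_right,
    norm_smul, ← Real.sqrt_sq (norm_nonneg (e i - e j)), he.norm_sub_sq hij,
    Real.norm_of_nonneg (Real.sqrt_nonneg 2), Real.mul_self_sqrt zero_le_two]

end CenteredSimplex

theorem exists_regular_simplex {E : Type*} [NormedAddCommGroup E] [InnerProductSpace ℝ E]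
    [FiniteDimensional ℝ E] {k : ℕ} (hk : k ≤ finrank ℝ E + 1) :
    ∃ p : Fin k → E, (∀ i, ‖p i‖ = √(2 - 2 / k)) ∧ ∀ i j, i ≠ j → dist (p i) (p j) = 2 := by
  obtain _ | k := k
  · exact ⟨Fin.elim0, fun i => i.elim0, fun i => i.elim0⟩
  let e := EuclideanSpace.basisFun (Fin (k + 1)) ℝ
  have he : Orthonormal ℝ e := e.orthonormal
  let H := (ℝ ∙ ∑ j, e j)ᗮ
  have : Fact (finrank ℝ (EuclideanSpace ℝ (Fin (k + 1))) = k + 1) := ⟨finrank_euclideanSpace_fin⟩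
  have hsum : ∑ j, e j ≠ 0 := fun h0 => by simpa [h0] using he.inner_sum_right 0
  have hH : finrank ℝ H ≤ finrank ℝ E := by
    rw [Submodule.finrank_orthogonal_span_singleton (n := k) hsum]
    omega
  obtain ⟨L⟩ := exists_linearIsometry_of_finrank_le hH
  have hmem (i) : centeredSimplex e i ∈ H :=
    Submodule.mem_orthogonal_singleton_iff_inner_left.2 (inner_centeredSimplex_sum he i)
  refine ⟨fun i => L ⟨centeredSimplex e i, hmem i⟩, fun i => ?_, fun i j hij => ?_⟩
  · rw [L.norm_map, Submodule.coe_norm, norm_centeredSimplex he, Fintype.card_fin]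
  · rw [L.dist_map, Subtype.dist_eq, dist_centeredSimplex he hij]

theorem sum_sum_norm_sub_sq {E ι : Type*} [NormedAddCommGroup E] [InnerProductSpace ℝ E]
    [Fintype ι] (p : ι → E) :
    ∑ i, ∑ j, ‖p i - p j‖ ^ 2
      = 2 * Fintype.card ι * ∑ i, ‖p i‖ ^ 2 - 2 * ‖∑ i, p i‖ ^ 2 := by
  simp only [norm_sub_sq_real, sum_add_distrib, sum_sub_distrib, ← mul_sum, ← inner_sum,
    ← sum_inner, real_inner_self_eq_norm_sq, sum_const, card_univ, nsmul_eq_mul]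
  ring

theorem sqrt_two_sub_two_div_card_le {E ι : Type*} [NormedAddCommGroup E]
    [InnerProductSpace ℝ E] [Fintype ι] [Nonempty ι] {p : ι → E} {ρ : ℝ}
    (hρ : ∀ i, ‖p i‖ ≤ ρ) (hp : ∀ i j, i ≠ j → 2 ≤ dist (p i) (p j)) :
    √(2 - 2 / Fintype.card ι) ≤ ρ := by
  classical
  set k : ℝ := ↑(Fintype.card ι)
  have hk : 0 < k := by positivity
  have hρ0 : 0 ≤ ρ := (norm_nonneg _).trans (hρ (Classical.arbitrary ι))
  have hrow (i : ι) : 4 * (k - 1) ≤ ∑ j, ‖p i - p j‖ ^ 2 := by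
    have h4 : ∀ j ∈ univ.erase i, 4 ≤ ‖p i - p j‖ ^ 2 := fun j hj => by
      have h2 := hp i j (ne_of_mem_erase hj).symm
      rw [dist_eq_norm] at h2
      nlinarith
    calc 4 * (k - 1) = #(univ.erase i) • (4 : ℝ) := by
          rw [card_erase_of_mem (mem_univ i), card_univ, nsmul_eq_mul,
            Nat.cast_pred Fintype.card_pos, mul_comm]
      _ ≤ ∑ j ∈ univ.erase i, ‖p i - p j‖ ^ 2 := card_nsmul_le_sum _ _ _ h4
      _ = ∑ j, ‖p i - p j‖ ^ 2 := by
          rw [← add_sum_erase _ _ (mem_univ i), sub_self, norm_zero, zero_pow two_ne_zero,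
            zero_add]
  have hnorms : ∑ i, ‖p i‖ ^ 2 ≤ k * ρ ^ 2 := by
    calc ∑ i, ‖p i‖ ^ 2 ≤ ∑ _i : ι, ρ ^ 2 :=
          sum_le_sum fun i _ => pow_le_pow_left₀ (norm_nonneg (p i)) (hρ i) 2
      _ = k * ρ ^ 2 := by rw [sum_const, card_univ, nsmul_eq_mul]
  have hpairs : k * (4 * (k - 1)) ≤ k * (2 * k * ρ ^ 2) := by
    calc k * (4 * (k - 1)) = ∑ _i : ι, 4 * (k - 1) := by rw [sum_const, card_univ, nsmul_eq_mul]
      _ ≤ ∑ i, ∑ j, ‖p i - p j‖ ^ 2 := sum_le_sum fun i _ => hrow i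
      _ = 2 * k * ∑ i, ‖p i‖ ^ 2 - 2 * ‖∑ i, p i‖ ^ 2 := sum_sum_norm_sub_sq p
      _ ≤ k * (2 * k * ρ ^ 2) := by nlinarith [sq_nonneg ‖∑ i, p i‖]
  have := le_of_mul_le_mul_left hpairs hk
  rw [Real.sqrt_le_left hρ0, sub_le_comm, le_div_iff₀ hk]
  linarith

theorem min_container_radius_simplex (n k : ℕ) (hk : 1 ≤ k) (hkn : k ≤ n + 1) :
    IsLeast {r : ℝ | ∃ p : Fin k → EuclideanSpace ℝ (Fin n),
        (∀ i, ‖p i‖ ≤ r - 1) ∧ ∀ i j, i ≠ j → 2 ≤ dist (p i) (p j)}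
      (1 + Real.sqrt (2 - 2 / k)) ∧
    ∃ p : Fin k → EuclideanSpace ℝ (Fin n),
      (∀ i, ‖p i‖ = Real.sqrt (2 - 2 / k)) ∧
      ∀ i j, i ≠ j → dist (p i) (p j) = 2 := by
  obtain ⟨p, hnorm, hdist⟩ := exists_regular_simplex (E := EuclideanSpace ℝ (Fin n))
    (by simpa using hkn)
  refine ⟨⟨⟨p, fun i => by simp [hnorm i], fun i j hij => (hdist i j hij).ge⟩, ?_⟩,
    p, hnorm, hdist⟩
  rintro r ⟨q, hq, hsep⟩
  have : Nonempty (Fin k) := ⟨⟨0, hk⟩⟩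
  have := sqrt_two_sub_two_div_card_le hq hsep
  rw [Fintype.card_fin] at this
  linarith
end
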